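/- arXiv:2509.10679 — 3 statements merged into one kernel-verified Lean document; each statement's English description precedes it below -/
import Mathlib

section
/- Let G = (V,E) be a finite simple graph and let F be a set of pairs of vertices none of which is an edge of G; let G⁺ be obtained from G by adding all pairs in F as edges. Then ν(G⁺) ≤ ν(G) + τ(F), where τ(F) is the minimum size of a set of vertices meeting every pair in F. Moreover, if ν(G⁺) = ν(G) + τ(F) and T is a set of vertices meeting every pair in F with |T| = τ(F), then every maximum matching of G⁺ covers every vertex of T. -/
namespace GRT

variable {V : Type*}

/-- The matching number of a graph: the maximum size of a matching. -/
noncomputable def matchingNumber (G : SimpleGraph V) : ℕ :=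
  sSup {n | ∃ M : G.Subgraph, M.IsMatching ∧ M.edgeSet.ncard = n}

/-- `M` is a maximum matching of `G`. -/
def IsMaximumMatching (G : SimpleGraph V) (M : G.Subgraph) : Prop :=
  M.IsMatching ∧ ∀ M' : G.Subgraph, M'.IsMatching → M'.edgeSet.ncard ≤ M.edgeSet.ncard

/-- A vertex is essential if it is covered by every maximum matching. -/
def Essential (G : SimpleGraph V) (v : V) : Prop :=
  ∀ M : G.Subgraph, IsMaximumMatching G M → v ∈ M.verts

/-- The `D`-part of the Gallai–Edmonds decomposition: inessential vertices. -/
def geD (G : SimpleGraph V) : Set V := {v | ¬ Essential G v}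

/-- The `A`-part of the Gallai–Edmonds decomposition. -/
def geA (G : SimpleGraph V) : Set V := {v | v ∉ geD G ∧ ∃ u ∈ geD G, G.Adj v u}

/-- The `C`-part of the Gallai–Edmonds decomposition. -/
def geC (G : SimpleGraph V) : Set V := {v | v ∉ geD G ∧ v ∉ geA G}

/-- The vertex sets of the connected components of the induced subgraph `G[D]`,
viewed as subsets of the ambient vertex set. -/
def componentSets (G : SimpleGraph V) (D : Set V) : Set (Set V) :=
  {S | ∃ c : (G.induce D).ConnectedComponent, S = Subtype.val '' c.supp}

/-- The vertex sets of the connected components of `G`. -/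
def compSets (G : SimpleGraph V) : Set (Set V) :=
  {S | ∃ c : G.ConnectedComponent, S = c.supp}

/-- `G` is CAD-complete: distinct vertices of `C` are adjacent, vertices of `A` are
adjacent to all other vertices, and every component of `G[D]` is a clique. -/
def CADComplete (G : SimpleGraph V) : Prop :=
  (∀ u ∈ geC G, ∀ v ∈ geC G, u ≠ v → G.Adj u v) ∧
  (∀ u ∈ geA G, ∀ v, u ≠ v → G.Adj u v) ∧
  (∀ S ∈ componentSets G (geD G), G.IsClique S)

/-- `G` is a disjoint union of odd cliques. -/
def DComplete (G : SimpleGraph V) : Prop :=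
  ∀ c : G.ConnectedComponent, G.IsClique c.supp ∧ Odd c.supp.ncard

/-- The number of copies of `K_ℓ` (complete subgraphs on `ℓ` vertices) in `G`. -/
noncomputable def cliqueCount (G : SimpleGraph V) (ℓ : ℕ) : ℕ :=
  {s : Finset V | G.IsNClique ℓ s}.ncard

/-- The clique-cone graph `G_{n,x,y}` on vertex set `Fin n`: the first `x` vertices form
the clique set `X`, the next `y` vertices form the cone set `Y`, and two distinct
vertices are adjacent iff both lie in `X` or at least one lies in `Y`. -/
def cliqueCone (n x y : ℕ) : SimpleGraph (Fin n) :=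
  SimpleGraph.fromRel (fun u v =>
    (u.val < x ∧ v.val < x) ∨ (x ≤ u.val ∧ u.val < x + y) ∨ (x ≤ v.val ∧ v.val < x + y))

/-- `𝒢` is a `q`-colouring of `G`: a family of spanning subgraphs whose union is `G`. -/
def IsColouring {q : ℕ} (G : SimpleGraph V) (𝒢 : Fin q → SimpleGraph V) : Prop :=
  (⨆ j, 𝒢 j) = G

/-- A colouring is `(t₁K₂,…,t_qK₂)`-free if the `j`-th colour has no matching of size `t j`. -/
def IsFree {q : ℕ} (t : Fin q → ℕ) (𝒢 : Fin q → SimpleGraph V) : Prop :=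
  ∀ j, matchingNumber (𝒢 j) ≤ t j - 1

/-- `φ_{ℓ,n}(x,y) = C(x+y,ℓ) + C(y,ℓ−1)·(n−x−y)`. -/
def phi (ℓ n x y : ℕ) : ℕ :=
  Nat.choose (x + y) ℓ + Nat.choose y (ℓ - 1) * (n - x - y)

/-- The incidence graph of an indexed family of subsets of `U`. -/
def incidenceGraph {U I : Type*} (K : I → Finset U) : SimpleGraph (U ⊕ I) :=
  SimpleGraph.fromRel (fun a b => ∃ u i, a = Sum.inl u ∧ b = Sum.inr i ∧ u ∈ K i)

/-- The minimum size of a set of vertices meeting every pair in `F`. -/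
noncomputable def coverNumber (F : Set (Sym2 V)) : ℕ :=
  sInf {n | ∃ T : Set V, (∀ e ∈ F, ∃ v ∈ T, v ∈ e) ∧ T.ncard = n}


section CoversAux
variable {V : Type*}

private lemma exists_partner' {G : SimpleGraph V} {M : G.Subgraph} {e : Sym2 V} {v : V}
    (he : e ∈ M.edgeSet) (hv : v ∈ e) : ∃ w, e = s(v, w) ∧ M.Adj v w := by
  induction e with
  | h a b =>
    rw [Sym2.mem_iff] at hv
    rw [SimpleGraph.Subgraph.mem_edgeSet] at he
    rcases hv with rfl | rfl
    · exact ⟨b, rfl, he⟩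
    · exact ⟨a, Sym2.eq_swap, he.symm⟩

private lemma edge_eq_of_matching' {G : SimpleGraph V} {M : G.Subgraph} (hM : M.IsMatching)
    {e f : Sym2 V} (he : e ∈ M.edgeSet) (hf : f ∈ M.edgeSet) {v : V}
    (hve : v ∈ e) (hvf : v ∈ f) : e = f := by
  obtain ⟨w, rfl, hw⟩ := exists_partner' he hve
  obtain ⟨w', rfl, hw'⟩ := exists_partner' hf hvf
  obtain ⟨u, _, hu⟩ := hM (M.edge_vert hw)
  rw [hu w hw, hu w' hw']

/-- Restriction of a subgraph of `G ⊔ H` to `G`. -/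
private def restrictSub {G H : SimpleGraph V} (M : (G ⊔ H).Subgraph) : G.Subgraph where
  verts := {v | ∃ w, M.Adj v w ∧ G.Adj v w}
  Adj a b := M.Adj a b ∧ G.Adj a b
  adj_sub h := h.2
  edge_vert h := ⟨_, h⟩
  symm := ⟨fun a b h => ⟨M.adj_symm h.1, h.2.symm⟩⟩

private lemma restrictSub_isMatching {G H : SimpleGraph V} {M : (G ⊔ H).Subgraph}
    (hM : M.IsMatching) : (restrictSub M).IsMatching := by
  rintro v ⟨w, hMw, hGw⟩
  refine ⟨w, ⟨hMw, hGw⟩, ?_⟩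
  rintro y ⟨hMy, _⟩
  obtain ⟨u, _, hu⟩ := hM (M.edge_vert hMw)
  rw [hu y hMy, hu w hMw]

private lemma restrictSub_edgeSet {G H : SimpleGraph V} (M : (G ⊔ H).Subgraph) :
    (restrictSub M).edgeSet = M.edgeSet ∩ G.edgeSet := by
  ext e
  induction e with
  | h a b => simp [restrictSub, SimpleGraph.Subgraph.mem_edgeSet]

private lemma matchingSet_bdd [Fintype V] (G : SimpleGraph V) :
    BddAbove {n | ∃ M : G.Subgraph, M.IsMatching ∧ M.edgeSet.ncard = n} := by
  refine ⟨Nat.card (Sym2 V), ?_⟩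
  rintro n ⟨M, _, rfl⟩
  simpa [Set.ncard_univ] using Set.ncard_le_ncard (Set.subset_univ M.edgeSet) Set.finite_univ

private lemma le_matchingNumber' [Fintype V] {G : SimpleGraph V} {M : G.Subgraph}
    (hM : M.IsMatching) : M.edgeSet.ncard ≤ matchingNumber G :=
  le_csSup (matchingSet_bdd G) ⟨M, hM, rfl⟩

private lemma exists_max_matching [Fintype V] (G : SimpleGraph V) :
    ∃ M : G.Subgraph, M.IsMatching ∧ M.edgeSet.ncard = matchingNumber G := by
  have hne : {n | ∃ M : G.Subgraph, M.IsMatching ∧ M.edgeSet.ncard = n}.Nonempty :=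
    ⟨0, ⊥, by intro v hv; simp at hv, by simp⟩
  exact Nat.sSup_mem hne (matchingSet_bdd G)

private lemma cover_exists' [Fintype V] (F : Set (Sym2 V)) :
    ∃ T : Set V, (∀ e ∈ F, ∃ v ∈ T, v ∈ e) ∧ T.ncard = coverNumber F := by
  have hne : {n | ∃ T : Set V, (∀ e ∈ F, ∃ v ∈ T, v ∈ e) ∧ T.ncard = n}.Nonempty := by
    refine ⟨(Set.univ : Set V).ncard, Set.univ, ?_, rfl⟩
    intro e he
    induction e with
    | h a b => exact ⟨a, trivial, by simp⟩
  exact Nat.sInf_mem hne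

private lemma coverNumber_le' {F : Set (Sym2 V)} {T : Set V}
    (hT : ∀ e ∈ F, ∃ v ∈ T, v ∈ e) : coverNumber F ≤ T.ncard :=
  Nat.sInf_le ⟨T, hT, rfl⟩

/-- Key estimate: any matching of `G ⊔ fromEdgeSet F` has size at most
`ν(G) + |T ∩ verts|` for any cover `T` of `F`. -/
private lemma key_estimate [Fintype V] (G : SimpleGraph V) (F : Set (Sym2 V))
    (M : (G ⊔ SimpleGraph.fromEdgeSet F).Subgraph) (hM : M.IsMatching)
    (T : Set V) (hT : ∀ e ∈ F, ∃ v ∈ T, v ∈ e) :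
    M.edgeSet.ncard ≤ matchingNumber G + (T ∩ M.verts).ncard := by
  have hsplit : M.edgeSet.ncard ≤
      (M.edgeSet ∩ G.edgeSet).ncard + (T ∩ M.verts).ncard := by
    rw [← Set.ncard_inter_add_ncard_diff_eq_ncard M.edgeSet G.edgeSet M.edgeSet.toFinite]
    gcongr
    have hK : ∀ e ∈ M.edgeSet \ G.edgeSet, e ∈ F := by
      intro e he
      have := M.edgeSet_subset he.1
      rw [SimpleGraph.edgeSet_sup, SimpleGraph.edgeSet_fromEdgeSet] at this
      rcases this with h | h
      · exact absurd h he.2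
      · exact h.1
    have hex : ∀ e : Sym2 V, ∃ v, e ∈ M.edgeSet \ G.edgeSet →
        v ∈ T ∧ v ∈ M.verts ∧ v ∈ e := by
      intro e
      by_cases h : e ∈ M.edgeSet \ G.edgeSet
      · obtain ⟨v, hvT, hve⟩ := hT e (hK e h)
        obtain ⟨w, _, hw⟩ := exists_partner' h.1 hve
        exact ⟨v, fun _ => ⟨hvT, M.edge_vert hw, hve⟩⟩
      · exact ⟨e.out.1, fun h' => absurd h' h⟩
    choose f hf using hex
    refine Set.ncard_le_ncard_of_injOn f (fun e he => ⟨(hf e he).1, (hf e he).2.1⟩) ?_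
      (T ∩ M.verts).toFinite
    intro e1 h1 e2 h2 hfe
    exact edge_eq_of_matching' hM h1.1 h2.1 (hf e1 h1).2.2 (hfe ▸ (hf e2 h2).2.2)
  refine hsplit.trans ?_
  gcongr
  calc (M.edgeSet ∩ G.edgeSet).ncard = (restrictSub M).edgeSet.ncard := by
        rw [restrictSub_edgeSet]
    _ ≤ matchingNumber G := le_matchingNumber' (restrictSub_isMatching hM)

end CoversAux

/-- covers lemma: adding a set `F` of non-edges to `G` increases the
matching number by at most `τ(F)`; if equality holds, every maximum matching of `G⁺`
covers every minimum cover of `F`. -/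
theorem matchingNumber_add_nonedges_le [Fintype V] (G : SimpleGraph V) (F : Set (Sym2 V))
    (hF : ∀ e ∈ F, ¬ e.IsDiag ∧ e ∉ G.edgeSet) :
    matchingNumber (G ⊔ SimpleGraph.fromEdgeSet F) ≤ matchingNumber G + coverNumber F ∧
    (matchingNumber (G ⊔ SimpleGraph.fromEdgeSet F) = matchingNumber G + coverNumber F →
      ∀ T : Set V, (∀ e ∈ F, ∃ v ∈ T, v ∈ e) → T.ncard = coverNumber F →
        ∀ M : (G ⊔ SimpleGraph.fromEdgeSet F).Subgraph,
          IsMaximumMatching (G ⊔ SimpleGraph.fromEdgeSet F) M → T ⊆ M.verts) := by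
  set Gp := G ⊔ SimpleGraph.fromEdgeSet F with hGp
  obtain ⟨M₀, hM₀, hM₀card⟩ := exists_max_matching Gp
  obtain ⟨T₀, hT₀, hT₀card⟩ := cover_exists' F
  have hle : matchingNumber Gp ≤ matchingNumber G + coverNumber F := by
    calc matchingNumber Gp = M₀.edgeSet.ncard := hM₀card.symm
      _ ≤ matchingNumber G + (T₀ ∩ M₀.verts).ncard := key_estimate G F M₀ hM₀ T₀ hT₀
      _ ≤ matchingNumber G + T₀.ncard :=
          Nat.add_le_add_left (Set.ncard_le_ncard Set.inter_subset_left T₀.toFinite) _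
      _ = matchingNumber G + coverNumber F := by rw [hT₀card]
  refine ⟨hle, ?_⟩
  intro heq T hT hTcard M hMmax
  have hMcard : M.edgeSet.ncard = matchingNumber Gp :=
    le_antisymm (le_matchingNumber' hMmax.1) (hM₀card ▸ hMmax.2 M₀ hM₀)
  have h1 : matchingNumber G + coverNumber F ≤
      matchingNumber G + (T ∩ M.verts).ncard := by
    calc matchingNumber G + coverNumber F = M.edgeSet.ncard := by rw [hMcard, heq]
      _ ≤ matchingNumber G + (T ∩ M.verts).ncard := key_estimate G F M hMmax.1 T hT
  have h2 : T.ncard ≤ (T ∩ M.verts).ncard := by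
    rw [hTcard]; exact Nat.le_of_add_le_add_left h1
  have h3 : T ∩ M.verts = T :=
    Set.eq_of_subset_of_ncard_le Set.inter_subset_left h2 T.toFinite
  intro v hv
  rw [← h3] at hv
  exact hv.2

end GRT
end

section
/- Let G = (V,E) be a finite simple graph with Gallai–Edmonds decomposition GE(G) = (C,A,D), and let G' be obtained from G by adding a single new edge both of whose endpoints lie in the same connected component of the induced subgraph G[D]. Then GE(G') = GE(G), the induced subgraphs G'[D] and G[D] have the same connected components (as vertex sets), and ν(G') = ν(G). -/
set_option linter.unusedSectionVars false
set_option linter.unusedVariables false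


namespace GRT

variable {V : Type*}

section Aux

section SetHelpers
variable {α : Type*} {S : Set α} {x a b z : α}

lemma set_eq1 (hxS : x ∈ S) (haS : a ∈ S) (hbS : b ∈ S) (hzS : z ∉ S)
    (hax : a ≠ x) (hbx : b ≠ x) :
    (((S \ {x, a}) \ {b}) ∪ {z}) ∪ {a, b} = (S \ {x}) ∪ {z} := by
  ext t
  simp only [Set.mem_union, Set.mem_diff, Set.mem_insert_iff, Set.mem_singleton_iff]
  constructor
  · rintro ((⟨⟨hts, htxa⟩, htb⟩ | rfl) | (rfl | rfl))
    · exact Or.inl ⟨hts, fun h => htxa (Or.inl h)⟩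
    · exact Or.inr rfl
    · exact Or.inl ⟨haS, hax⟩
    · exact Or.inl ⟨hbS, hbx⟩
  · rintro (⟨hts, htx⟩ | rfl)
    · by_cases ha : t = a
      · exact Or.inr (Or.inl ha)
      · by_cases hb : t = b
        · exact Or.inr (Or.inr hb)
        · refine Or.inl (Or.inl ⟨⟨hts, ?_⟩, hb⟩)
          rintro (h | h)
          · exact htx h
          · exact ha h
    · exact Or.inl (Or.inr rfl)

lemma set_eq2 (haS : a ∈ S) (hbS : b ∈ S) (hxS : x ∉ S) (hza : z ≠ a) (hzx : z ≠ x) :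
    ((((S \ {a, b}) ∪ {b}) \ {z}) ∪ {x, a}) = (S ∪ {x}) \ {z} := by
  ext t
  simp only [Set.mem_union, Set.mem_diff, Set.mem_insert_iff, Set.mem_singleton_iff]
  constructor
  · rintro (⟨(⟨hts, -⟩ | rfl), htz⟩ | (rfl | rfl))
    · exact ⟨Or.inl hts, htz⟩
    · exact ⟨Or.inl hbS, htz⟩
    · exact ⟨Or.inr rfl, fun h => hzx h.symm⟩
    · exact ⟨Or.inl haS, fun h => hza h.symm⟩
  · rintro ⟨hts | rfl, htz⟩
    · by_cases ha : t = a
      · exact Or.inr (Or.inr ha)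
      · by_cases hb : t = b
        · exact Or.inl ⟨Or.inr hb, htz⟩
        · refine Or.inl ⟨Or.inl ⟨hts, ?_⟩, htz⟩
          rintro (h | h)
          · exact ha h
          · exact hb h
    · exact Or.inr (Or.inl rfl)

lemma set_eq3 (haS : a ∈ S) (hax : a ≠ x) :
    (S \ {x, a}) ∪ {a, b} = (S \ {x}) ∪ {b} := by
  ext t
  simp only [Set.mem_union, Set.mem_diff, Set.mem_insert_iff, Set.mem_singleton_iff]
  constructor
  · rintro (⟨hts, htxa⟩ | (rfl | rfl))
    · exact Or.inl ⟨hts, fun h => htxa (Or.inl h)⟩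
    · exact Or.inl ⟨haS, hax⟩
    · exact Or.inr rfl
  · rintro (⟨hts, htx⟩ | rfl)
    · by_cases ha : t = a
      · exact Or.inr (Or.inl ha)
      · refine Or.inl ⟨hts, ?_⟩
        rintro (h | h)
        · exact htx h
        · exact ha h
    · exact Or.inr (Or.inr rfl)

lemma set_eq4 (haS : a ∈ S) (hxb : x ≠ b) (hab : a ≠ b) :
    (S \ {a, b}) ∪ {x, a} = (S ∪ {x}) \ {b} := by
  ext t
  simp only [Set.mem_union, Set.mem_diff, Set.mem_insert_iff, Set.mem_singleton_iff]
  constructor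
  · rintro (⟨hts, htab⟩ | (rfl | rfl))
    · exact ⟨Or.inl hts, fun h => htab (Or.inr h)⟩
    · exact ⟨Or.inr rfl, hxb⟩
    · exact ⟨Or.inl haS, hab⟩
  · rintro ⟨hts | rfl, htb⟩
    · by_cases ha : t = a
      · exact Or.inr (Or.inr ha)
      · refine Or.inl ⟨hts, ?_⟩
        rintro (h | h)
        · exact ha h
        · exact htb h
    · exact Or.inr (Or.inl rfl)

end SetHelpers


/-- A set of edges that forms a matching: edges of `G`, pairwise vertex-disjoint. -/
def Matchlike (G : SimpleGraph V) (F : Set (Sym2 V)) : Prop :=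
  F ⊆ G.edgeSet ∧ F.Pairwise fun e f => ∀ x, x ∈ e → x ∉ f

/-- Support (covered vertices) of an edge set. -/
def msup (F : Set (Sym2 V)) : Set V := {v | ∃ e ∈ F, v ∈ e}

lemma mem_msup {F : Set (Sym2 V)} {v : V} : v ∈ msup F ↔ ∃ e ∈ F, v ∈ e := Iff.rfl

lemma msup_mono {F F' : Set (Sym2 V)} (h : F ⊆ F') : msup F ⊆ msup F' :=
  fun _ ⟨e, he, hv⟩ => ⟨e, h he, hv⟩

lemma Matchlike.of_subset {G : SimpleGraph V} {F F' : Set (Sym2 V)}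
    (h : Matchlike G F) (hs : F' ⊆ F) : Matchlike G F' :=
  ⟨hs.trans h.1, h.2.mono hs⟩

/-- uniqueness of the matching edge at a vertex -/
lemma Matchlike.eq_of_mem {G : SimpleGraph V} {F : Set (Sym2 V)} (h : Matchlike G F)
    {e f : Sym2 V} {x : V} (he : e ∈ F) (hf : f ∈ F) (hxe : x ∈ e) (hxf : x ∈ f) : e = f := by
  by_contra hne
  exact h.2 he hf hne x hxe hxf

lemma msup_insert {F : Set (Sym2 V)} {x y : V} :
    msup (insert s(x, y) F) = msup F ∪ {x, y} := by
  ext v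
  simp only [msup, Set.mem_setOf_eq, Set.mem_insert_iff, Set.mem_union, Sym2.mem_iff]
  constructor
  · rintro ⟨e, he | he, hv⟩
    · subst he; right; simpa using hv
    · exact Or.inl ⟨e, he, hv⟩
  · rintro (⟨e, he, hv⟩ | hv)
    · exact ⟨e, Or.inr he, hv⟩
    · exact ⟨s(x, y), Or.inl rfl, by simpa using hv⟩

lemma msup_diff {G : SimpleGraph V} {F : Set (Sym2 V)} (h : Matchlike G F) {x y : V}
    (he : s(x, y) ∈ F) : msup (F \ {s(x, y)}) = msup F \ {x, y} := by
  ext v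
  simp only [msup, Set.mem_setOf_eq, Set.mem_diff, Set.mem_singleton_iff, Set.mem_insert_iff]
  constructor
  · rintro ⟨e, ⟨heF, hne⟩, hv⟩
    refine ⟨⟨e, heF, hv⟩, ?_⟩
    intro hvxy
    have : v ∈ s(x, y) := by rcases hvxy with h1 | h1 <;> simp [h1]
    exact hne (h.eq_of_mem heF he hv this)
  · rintro ⟨⟨e, heF, hv⟩, hvxy⟩
    refine ⟨e, ⟨heF, ?_⟩, hv⟩
    rintro rfl
    rcases Sym2.mem_iff.mp hv with rfl | rfl
    · exact hvxy (Or.inl rfl)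
    · exact hvxy (Or.inr rfl)

lemma Matchlike.insert {G : SimpleGraph V} {F : Set (Sym2 V)} (h : Matchlike G F) {x y : V}
    (hadj : G.Adj x y) (hx : x ∉ msup F) (hy : y ∉ msup F) :
    Matchlike G (insert s(x, y) F) := by
  constructor
  · rintro e (rfl | he)
    · exact G.mem_edgeSet.mpr hadj
    · exact h.1 he
  · refine Set.Pairwise.insert h.2 ?_
    intro f hf _
    have hdisj : ∀ z, z ∈ s(x, y) → z ∉ f := by
      intro z hz hzf
      rcases Sym2.mem_iff.mp hz with rfl | rfl
      · exact hx ⟨f, hf, hzf⟩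
      · exact hy ⟨f, hf, hzf⟩
    constructor
    · exact hdisj
    · intro z hzf hz
      exact hdisj z hz hzf

lemma not_mem_of_not_mem_msup {F : Set (Sym2 V)} {x y : V} (hx : x ∉ msup F) :
    s(x, y) ∉ F := fun h => hx ⟨_, h, by simp⟩

section Fin
variable [Fintype V]

lemma sym2_finite (F : Set (Sym2 V)) : F.Finite := Set.toFinite F

lemma ncard_insert {F : Set (Sym2 V)} {x y : V} (hx : x ∉ msup F) :
    (insert s(x, y) F).ncard = F.ncard + 1 :=
  Set.ncard_insert_of_notMem (not_mem_of_not_mem_msup hx) (sym2_finite F)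

lemma ncard_diff {F : Set (Sym2 V)} {e : Sym2 V} (he : e ∈ F) :
    (F \ {e}).ncard + 1 = F.ncard := by
  rw [Set.ncard_diff_singleton_add_one he (sym2_finite F)]

/-- Bridge: a matching subgraph gives a matchlike edge set. -/
lemma bridge_to {G : SimpleGraph V} {M : G.Subgraph} (hM : M.IsMatching) :
    Matchlike G M.edgeSet ∧ msup M.edgeSet = M.verts := by
  constructor
  · refine ⟨M.edgeSet_subset, ?_⟩
    intro e he f hf hne x hxe hxf
    obtain ⟨a, rfl⟩ := Sym2.mem_iff_exists.mp hxe
    obtain ⟨b, rfl⟩ := Sym2.mem_iff_exists.mp hxf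
    have ha : M.Adj x a := SimpleGraph.Subgraph.mem_edgeSet.mp he
    have hb : M.Adj x b := SimpleGraph.Subgraph.mem_edgeSet.mp hf
    obtain ⟨w, -, huniq⟩ := hM (M.edge_vert ha)
    exact hne (by rw [huniq a ha, huniq b hb])
  · ext v
    constructor
    · rintro ⟨e, he, hv⟩
      exact SimpleGraph.Subgraph.mem_verts_of_mem_edge he hv
    · intro hv
      obtain ⟨w, hw, -⟩ := hM hv
      exact ⟨s(v, w), SimpleGraph.Subgraph.mem_edgeSet.mpr hw, by simp⟩

/-- Bridge: a matchlike edge set gives a matching subgraph. -/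
lemma bridge_from {G : SimpleGraph V} {F : Set (Sym2 V)} (hF : Matchlike G F) :
    ∃ M : G.Subgraph, M.IsMatching ∧ M.edgeSet = F ∧ M.verts = msup F := by
  refine ⟨⟨msup F, fun a b => s(a, b) ∈ F, ?_, ?_, ?_⟩, ?_, ?_, rfl⟩
  · intro a b h
    have := hF.1 h
    rw [SimpleGraph.mem_edgeSet] at this
    exact this
  · intro a b h
    exact ⟨_, h, by simp⟩
  · constructor; intro a b h
    rwa [Sym2.eq_swap] at h
  · rintro v ⟨e, he, hv⟩
    obtain ⟨w, rfl⟩ := Sym2.mem_iff_exists.mp hv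
    refine ⟨w, he, ?_⟩
    intro y hy
    have : s(v, w) = s(v, y) := hF.eq_of_mem he hy (Sym2.mem_mk_left v w) (Sym2.mem_mk_left v y)
    exact (Sym2.congr_right.mp this).symm
  · ext e
    induction e with
    | _ a b => exact Iff.rfl

lemma matchingNumber_nonempty (G : SimpleGraph V) :
    {n | ∃ M : G.Subgraph, M.IsMatching ∧ M.edgeSet.ncard = n}.Nonempty := by
  refine ⟨0, ⊥, ?_, by simp [SimpleGraph.Subgraph.edgeSet_bot]⟩
  intro v hv
  simp only [SimpleGraph.Subgraph.verts_bot, Set.mem_empty_iff_false] at hv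

lemma matchingNumber_bddAbove (G : SimpleGraph V) :
    BddAbove {n | ∃ M : G.Subgraph, M.IsMatching ∧ M.edgeSet.ncard = n} := by
  refine ⟨Nat.card (Sym2 V), ?_⟩
  rintro n ⟨M, -, rfl⟩
  calc M.edgeSet.ncard ≤ (Set.univ : Set (Sym2 V)).ncard :=
        Set.ncard_le_ncard (Set.subset_univ _) Set.finite_univ
    _ = Nat.card (Sym2 V) := Set.ncard_univ _

lemma matchlike_ncard_le {G : SimpleGraph V} {F : Set (Sym2 V)} (hF : Matchlike G F) :
    F.ncard ≤ matchingNumber G := by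
  obtain ⟨M, hM, hE, -⟩ := bridge_from hF
  exact le_csSup (matchingNumber_bddAbove G) ⟨M, hM, by rw [hE]⟩

lemma isMaximumMatching_iff {G : SimpleGraph V} {M : G.Subgraph} (hM : M.IsMatching) :
    IsMaximumMatching G M ↔ M.edgeSet.ncard = matchingNumber G := by
  constructor
  · intro h
    refine le_antisymm (le_csSup (matchingNumber_bddAbove G) ⟨M, hM, rfl⟩) ?_
    refine csSup_le (matchingNumber_nonempty G) ?_
    rintro n ⟨M', hM', rfl⟩
    exact h.2 M' hM'
  · intro h
    refine ⟨hM, ?_⟩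
    intro M' hM'
    rw [h]
    exact le_csSup (matchingNumber_bddAbove G) ⟨M', hM', rfl⟩

/-- From a maximum-size matchlike family missing `w`, conclude `w` inessential. -/
lemma not_essential_of_matchlike {G : SimpleGraph V} {F : Set (Sym2 V)} {w : V}
    (hF : Matchlike G F) (hcard : F.ncard = matchingNumber G) (hw : w ∉ msup F) :
    w ∈ geD G := by
  obtain ⟨M, hM, hE, hV⟩ := bridge_from hF
  intro hEss
  have : IsMaximumMatching G M := (isMaximumMatching_iff hM).mpr (by rw [hE]; exact hcard)
  exact hw (hV ▸ hEss M this)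

lemma exists_matchlike_of_inessential {G : SimpleGraph V} {w : V} (hw : w ∈ geD G) :
    ∃ F, Matchlike G F ∧ F.ncard = matchingNumber G ∧ w ∉ msup F := by
  simp only [geD, Set.mem_setOf_eq, Essential, not_forall] at hw
  obtain ⟨M, hMmax, hwM⟩ := hw
  obtain ⟨hml, hsup⟩ := bridge_to hMmax.1
  exact ⟨M.edgeSet, hml, (isMaximumMatching_iff hMmax.1).mp hMmax, by rw [hsup]; exact hwM⟩


/-- Key exchange lemma: walking the alternating path from `x` (covered by `M`, missed by
`N`) reaches a vertex `z` missed by `M` and covered by `N`; switching along the path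
yields matchings `M'` (same size as `M`, covering `z` instead of `x`) and `N'`
(same size as `N`, covering `x` instead of `z`). -/
lemma SD {G : SimpleGraph V} : ∀ n (M : Set (Sym2 V)), M.ncard ≤ n →
    Matchlike G M → ∀ (N : Set (Sym2 V)), Matchlike G N → ∀ x : V,
    x ∈ msup M → x ∉ msup N →
    (∀ y ∈ msup M, ∀ K, Matchlike G K → msup K ⊆ msup N ∪ {x, y} → K.ncard ≤ N.ncard) →
    ∃ z, z ∈ msup N ∧ z ∉ msup M ∧
      (∃ M', Matchlike G M' ∧ M'.ncard = M.ncard ∧ msup M' = (msup M \ {x}) ∪ {z}) ∧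
      (∃ N', Matchlike G N' ∧ N'.ncard = N.ncard ∧ msup N' = (msup N ∪ {x}) \ {z}) := by
  intro n
  induction n with
  | zero =>
    intro M hcard hM N hN x hxM hxN H
    exfalso
    obtain ⟨e, heM, -⟩ := hxM
    have : M.ncard ≠ 0 := by
      intro h0
      rw [(Set.ncard_eq_zero (sym2_finite M)).mp h0] at heM
      exact heM
    omega
  | succ n ih =>
    intro M hcard hM N hN x hxM hxN H
    obtain ⟨e, heM, hxe⟩ := hxM
    obtain ⟨a, rfl⟩ := Sym2.mem_iff_exists.mp hxe
    have hGxa : G.Adj x a := (G.mem_edgeSet).mp (hM.1 heM)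
    have hax : a ≠ x := hGxa.ne'
    have haM : a ∈ msup M := ⟨_, heM, Sym2.mem_mk_right x a⟩
    have hxM : x ∈ msup M := ⟨_, heM, Sym2.mem_mk_left x a⟩
    have hmsupM2 : msup (M \ {s(x, a)}) = msup M \ {x, a} := msup_diff hM heM
    have hxM2 : x ∉ msup (M \ {s(x, a)}) := by rw [hmsupM2]; simp
    have haM2 : a ∉ msup (M \ {s(x, a)}) := by rw [hmsupM2]; simp
    -- a is covered by N
    have haN : a ∈ msup N := by
      by_contra haN
      have hK : Matchlike G (insert s(x, a) N) := hN.insert hGxa hxN haN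
      have hle := H a haM _ hK (by rw [msup_insert])
      rw [ncard_insert hxN] at hle
      omega
    obtain ⟨f, hfN, haf⟩ := haN
    obtain ⟨b, rfl⟩ := Sym2.mem_iff_exists.mp haf
    have hGab : G.Adj a b := (G.mem_edgeSet).mp (hN.1 hfN)
    have hba : b ≠ a := hGab.ne'
    have hbN : b ∈ msup N := ⟨_, hfN, Sym2.mem_mk_right a b⟩
    have haN : a ∈ msup N := ⟨_, hfN, Sym2.mem_mk_left a b⟩
    have hbx : b ≠ x := by rintro rfl; exact hxN hbN
    have hmsupN2 : msup (N \ {s(a, b)}) = msup N \ {a, b} := msup_diff hN hfN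
    have haN2 : a ∉ msup (N \ {s(a, b)}) := by rw [hmsupN2]; simp
    have hbN2 : b ∉ msup (N \ {s(a, b)}) := by rw [hmsupN2]; simp
    have hcard2 : (M \ {s(x, a)}).ncard + 1 = M.ncard := ncard_diff heM
    have hcardN2 : (N \ {s(a, b)}).ncard + 1 = N.ncard := ncard_diff hfN
    by_cases hbM : b ∈ msup M
    · -- recursive case
      have hbM2 : b ∈ msup (M \ {s(x, a)}) := by
        rw [hmsupM2]
        exact ⟨hbM, by simp [hbx, hba]⟩
      have H2 : ∀ y ∈ msup (M \ {s(x, a)}), ∀ K, Matchlike G K →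
          msup K ⊆ msup (N \ {s(a, b)}) ∪ {b, y} → K.ncard ≤ (N \ {s(a, b)}).ncard := by
        intro y hy K hK hsub
        by_contra hgt
        push_neg at hgt
        have hyM : y ∈ msup M := by rw [hmsupM2] at hy; exact hy.1
        have hyx : y ≠ x := by rw [hmsupM2] at hy; intro h; exact hy.2 (by simp [h])
        have hya : y ≠ a := by rw [hmsupM2] at hy; intro h; exact hy.2 (by simp [h])
        have hxK : x ∉ msup K := by
          intro hxK
          rcases hsub hxK with h | h
          · rw [hmsupN2] at h; exact hxN h.1
          · rcases h with h | h
            · exact hbx h.symm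
            · exact hyx h.symm
        have haK : a ∉ msup K := by
          intro haK
          rcases hsub haK with h | h
          · rw [hmsupN2] at h; exact h.2 (by simp)
          · rcases h with h | h
            · exact hba h.symm
            · exact hya h.symm
        have hK' : Matchlike G (insert s(x, a) K) := hK.insert hGxa hxK haK
        have hsub' : msup (insert s(x, a) K) ⊆ msup N ∪ {x, y} := by
          rw [msup_insert]
          intro t ht
          rcases ht with ht | ht
          · rcases hsub ht with h | h
            · rw [hmsupN2] at h; exact Or.inl h.1
            · rcases h with rfl | rfl
              · exact Or.inl hbN
              · exact Or.inr (by simp)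
          · rcases ht with rfl | rfl
            · exact Or.inr (by simp)
            · exact Or.inl haN
        have := H y hyM _ hK' hsub'
        rw [ncard_insert hxK] at this
        omega
      obtain ⟨z, hzN2, hzM2, ⟨M2', hmlM2', hcardM2', hmsupM2'⟩, ⟨N2', hmlN2', hcardN2', hmsupN2'⟩⟩ :=
        ih (M \ {s(x, a)}) (by omega) (hM.of_subset Set.diff_subset) (N \ {s(a, b)})
          (hN.of_subset Set.diff_subset) b hbM2 hbN2 H2
      have hzN : z ∈ msup N := by rw [hmsupN2] at hzN2; exact hzN2.1
      have hza : z ≠ a := by rw [hmsupN2] at hzN2; intro h; exact hzN2.2 (by simp [h])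
      have hzb : z ≠ b := by rw [hmsupN2] at hzN2; intro h; exact hzN2.2 (by simp [h])
      have hzx : z ≠ x := by rintro rfl; exact hxN hzN
      have hzM : z ∉ msup M := by
        intro hzM
        exact hzM2 (by rw [hmsupM2]; exact ⟨hzM, by simp [hzx, hza]⟩)
      refine ⟨z, hzN, hzM, ?_, ?_⟩
      · -- M' := insert s(a,b) M2'
        have haM2' : a ∉ msup M2' := by
          rw [hmsupM2', hmsupM2]
          rintro (⟨⟨-, h⟩, -⟩ | h)
          · exact h (by simp)
          · exact hza h.symm
        have hbM2' : b ∉ msup M2' := by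
          rw [hmsupM2']
          rintro (⟨-, h⟩ | h)
          · exact h rfl
          · exact hzb h.symm
        refine ⟨insert s(a, b) M2', hmlM2'.insert hGab haM2' hbM2', ?_, ?_⟩
        · rw [ncard_insert haM2', hcardM2']; omega
        · rw [msup_insert, hmsupM2', hmsupM2]
          exact set_eq1 hxM haM hbM hzM hax hbx
      · -- N' := insert s(x,a) N2'
        have hxN2' : x ∉ msup N2' := by
          rw [hmsupN2', hmsupN2]
          rintro ⟨h | h, -⟩
          · exact hxN h.1
          · exact hbx h.symm
        have haN2' : a ∉ msup N2' := by
          rw [hmsupN2', hmsupN2]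
          rintro ⟨h | h, -⟩
          · exact h.2 (by simp)
          · exact hba h.symm
        refine ⟨insert s(x, a) N2', hmlN2'.insert hGxa hxN2' haN2', ?_, ?_⟩
        · rw [ncard_insert hxN2', hcardN2']; omega
        · rw [msup_insert, hmsupN2', hmsupN2]
          exact set_eq2 haN hbN hxN hza hzx
    · -- base case: z := b
      refine ⟨b, hbN, hbM, ?_, ?_⟩
      · have hbM2 : b ∉ msup (M \ {s(x, a)}) :=
          fun h => hbM (msup_mono Set.diff_subset h)
        refine ⟨insert s(a, b) (M \ {s(x, a)}),
          (hM.of_subset Set.diff_subset).insert hGab haM2 hbM2, ?_, ?_⟩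
        · rw [ncard_insert haM2]; omega
        · rw [msup_insert, hmsupM2]
          exact set_eq3 haM hax
      · have hxN2 : x ∉ msup (N \ {s(a, b)}) :=
          fun h => hxN (msup_mono Set.diff_subset h)
        refine ⟨insert s(x, a) (N \ {s(a, b)}),
          (hN.of_subset Set.diff_subset).insert hGxa hxN2 haN2, ?_, ?_⟩
        · rw [ncard_insert hxN2]; omega
        · rw [msup_insert, hmsupN2]
          exact set_eq4 haN (fun h => hbx h.symm) (fun h => hba h.symm)


lemma SD' {G : SimpleGraph V} {M N : Set (Sym2 V)} {x : V} (hM : Matchlike G M)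
    (hN : Matchlike G N) (hNcard : N.ncard = matchingNumber G)
    (hxM : x ∈ msup M) (hxN : x ∉ msup N) :
    ∃ z, z ∈ msup N ∧ z ∉ msup M ∧
      (∃ M', Matchlike G M' ∧ M'.ncard = M.ncard ∧ msup M' = (msup M \ {x}) ∪ {z}) ∧
      (∃ N', Matchlike G N' ∧ N'.ncard = N.ncard ∧ msup N' = (msup N ∪ {x}) \ {z}) := by
  refine SD M.ncard M le_rfl hM N hN x hxM hxN ?_
  intro y hy K hK hsub
  exact (matchlike_ncard_le hK).trans_eq hNcard.symm

/-- No matching can miss both endpoints of a path inside `G[D]` without being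
augmentable. -/
lemma KEY0 {G : SimpleGraph V} : ∀ {a b : ↥(geD G)} (p : (G.induce (geD G)).Walk a b),
    a ≠ b → ∀ M : Set (Sym2 V), Matchlike G M → (a : V) ∉ msup M → (b : V) ∉ msup M →
    M.ncard + 1 ≤ matchingNumber G := by
  intro a b p
  induction p with
  | nil => intro hab; exact absurd rfl hab
  | @cons a c b h q ih =>
    intro hab M hM haM hbM
    have hGac : G.Adj ↑a ↑c := h
    by_cases hcb : c = b
    · subst hcb
      have : (insert s((a : V), (c : V)) M).ncard = M.ncard + 1 := ncard_insert haM
      have hle := matchlike_ncard_le (hM.insert hGac haM hbM)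
      omega
    · have hvcb : (c : V) ≠ (b : V) := fun hh => hcb (Subtype.ext hh)
      by_cases hcM : (c : V) ∈ msup M
      · obtain ⟨N, hN, hNcard, hcN⟩ := exists_matchlike_of_inessential c.2
        obtain ⟨z, hzN, hzM, ⟨M', hM', hMcard', hMsup'⟩, -⟩ := SD' hM hN hNcard hcM hcN
        have hcM' : (c : V) ∉ msup M' := by
          rw [hMsup']
          rintro (⟨-, hcc⟩ | hcz)
          · exact hcc rfl
          · exact hzM (hcz ▸ hcM)
        by_cases hzb : z = (b : V)
        · have hvab : (a : V) ≠ (b : V) := fun hh => hab (Subtype.ext hh)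
          have haM' : (a : V) ∉ msup M' := by
            rw [hMsup']
            rintro (⟨hc, -⟩ | hc)
            · exact haM hc
            · exact hvab (hc.trans hzb)
          have : (insert s((a : V), (c : V)) M').ncard = M'.ncard + 1 := ncard_insert haM'
          have hle := matchlike_ncard_le (hM'.insert hGac haM' hcM')
          omega
        · have hbM' : (b : V) ∉ msup M' := by
            rw [hMsup']
            rintro (⟨hc, -⟩ | hc)
            · exact hbM hc
            · exact hzb hc.symm
          have := ih hcb M' hM' hcM' hbM'
          omega
      · exact ih hcb M hM hcM hbM

/-- Augmenting along a path inside `G[D]` while keeping a vertex `w ∉ D` exposed. -/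
lemma KEY1 {G : SimpleGraph V} {w : V} (hw : w ∉ geD G) :
    ∀ {a b : ↥(geD G)} (p : (G.induce (geD G)).Walk a b),
    a ≠ b → ∀ M : Set (Sym2 V), Matchlike G M → (a : V) ∉ msup M → (b : V) ∉ msup M →
    w ∉ msup M →
    ∃ F, Matchlike G F ∧ M.ncard + 1 ≤ F.ncard ∧ w ∉ msup F := by
  intro a b p
  induction p with
  | nil => intro hab; exact absurd rfl hab
  | @cons a c b h q ih =>
    intro hab M hM haM hbM hwM
    have hGac : G.Adj ↑a ↑c := h
    have hwa : w ≠ (a : V) := fun hh => hw (hh ▸ a.2)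
    have hwb : w ≠ (b : V) := fun hh => hw (hh ▸ b.2)
    have hwc : w ≠ (c : V) := fun hh => hw (hh ▸ c.2)
    by_cases hcb : c = b
    · subst hcb
      refine ⟨insert s((a : V), (c : V)) M, hM.insert hGac haM hbM, ?_, ?_⟩
      · rw [ncard_insert haM]
      · rw [msup_insert]
        rintro (hc | hc)
        · exact hwM hc
        · rcases hc with hc | hc
          · exact hwa hc
          · exact hwc hc
    · have hvcb : (c : V) ≠ (b : V) := fun hh => hcb (Subtype.ext hh)
      by_cases hcM : (c : V) ∈ msup M
      · obtain ⟨N, hN, hNcard, hcN⟩ := exists_matchlike_of_inessential c.2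
        obtain ⟨z, hzN, hzM, ⟨M', hM', hMcard', hMsup'⟩, ⟨N', hN', hNcard', hNsup'⟩⟩ :=
          SD' hM hN hNcard hcM hcN
        by_cases hzw : z = w
        · refine ⟨N', hN', ?_, ?_⟩
          · have := KEY0 (SimpleGraph.Walk.cons h q) hab M hM haM hbM
            omega
          · rw [hNsup', hzw]
            rintro ⟨-, hc⟩
            exact hc rfl
        · have hcM' : (c : V) ∉ msup M' := by
            rw [hMsup']
            rintro (⟨-, hcc⟩ | hcz)
            · exact hcc rfl
            · exact hzM (hcz ▸ hcM)
          have hwM' : w ∉ msup M' := by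
            rw [hMsup']
            rintro (⟨hc, -⟩ | hc)
            · exact hwM hc
            · exact hzw hc.symm
          by_cases hzb : z = (b : V)
          · have hvab : (a : V) ≠ (b : V) := fun hh => hab (Subtype.ext hh)
            have haM' : (a : V) ∉ msup M' := by
              rw [hMsup']
              rintro (⟨hc, -⟩ | hc)
              · exact haM hc
              · exact hvab (hc.trans hzb)
            refine ⟨insert s((a : V), (c : V)) M', hM'.insert hGac haM' hcM', ?_, ?_⟩
            · rw [ncard_insert haM', hMcard']
            · rw [msup_insert]
              rintro (hc | hc)
              · exact hwM' hc
              · rcases hc with hc | hc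
                · exact hwa hc
                · exact hwc hc
          · have hbM' : (b : V) ∉ msup M' := by
              rw [hMsup']
              rintro (⟨hc, -⟩ | hc)
              · exact hbM hc
              · exact hzb hc.symm
            obtain ⟨F, hF, hFc, hFw⟩ := ih hcb M' hM' hcM' hbM' hwM'
            exact ⟨F, hF, by omega, hFw⟩
      · exact ih hcb M hM hcM hbM hwM

end Fin
end Aux

lemma supp_eq_of_reachable_iff {α : Type*} {H H' : SimpleGraph α}
    (h : ∀ x y, H.Reachable x y ↔ H'.Reachable x y) (x : α) :
    (H.connectedComponentMk x).supp = (H'.connectedComponentMk x).supp := by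
  ext y
  simp only [SimpleGraph.ConnectedComponent.mem_supp_iff, SimpleGraph.ConnectedComponent.eq]
  exact h y x

/-- `D`-edges: adding a single new edge inside a connected component of
`G[D]` preserves the Gallai–Edmonds decomposition, the component structure of `G[D]`,
and the matching number. -/
theorem GE_add_D_edge [Fintype V] (G : SimpleGraph V) (u v : V)
    (huv : u ≠ v) (hadj : ¬ G.Adj u v)
    (hu : u ∈ geD G) (hv : v ∈ geD G)
    (hcomp : (G.induce (geD G)).Reachable ⟨u, hu⟩ ⟨v, hv⟩) :
    geC (G ⊔ SimpleGraph.fromEdgeSet {s(u, v)}) = geC G ∧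
    geA (G ⊔ SimpleGraph.fromEdgeSet {s(u, v)}) = geA G ∧
    geD (G ⊔ SimpleGraph.fromEdgeSet {s(u, v)}) = geD G ∧
    componentSets (G ⊔ SimpleGraph.fromEdgeSet {s(u, v)}) (geD G) = componentSets G (geD G) ∧
    matchingNumber (G ⊔ SimpleGraph.fromEdgeSet {s(u, v)}) = matchingNumber G := by
  classical
  set G' := G ⊔ SimpleGraph.fromEdgeSet {s(u, v)} with hG'
  obtain ⟨p⟩ := id hcomp
  have hab : (⟨u, hu⟩ : ↥(geD G)) ≠ ⟨v, hv⟩ := fun h => huv (congrArg Subtype.val h)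
  have hedge : G'.edgeSet = G.edgeSet ∪ {s(u, v)} := by
    rw [hG', SimpleGraph.edgeSet_sup, SimpleGraph.edgeSet_fromEdgeSet]
    congr 1
    ext e
    simp only [Set.mem_diff, Set.mem_singleton_iff, Set.mem_setOf_eq, and_iff_left_iff_imp]
    rintro rfl
    simp [huv]
  have hml_up : ∀ F : Set (Sym2 V), Matchlike G F → Matchlike G' F := by
    intro F hF
    exact ⟨hF.1.trans (by rw [hedge]; exact Set.subset_union_left), hF.2⟩
  have hml_down : ∀ F : Set (Sym2 V), Matchlike G' F → s(u, v) ∉ F → Matchlike G F := by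
    intro F hF he
    refine ⟨?_, hF.2⟩
    intro e heF
    have := hF.1 heF
    rw [hedge] at this
    rcases this with h | h
    · exact h
    · rw [Set.mem_singleton_iff] at h
      exact absurd (h ▸ heF) he
  have hνle : matchingNumber G' ≤ matchingNumber G := by
    refine csSup_le (matchingNumber_nonempty G') ?_
    rintro n ⟨M, hM, rfl⟩
    obtain ⟨hF', hsup'⟩ := bridge_to hM
    by_cases he : s(u, v) ∈ M.edgeSet
    · have hF : Matchlike G (M.edgeSet \ {s(u, v)}) := by
        refine hml_down _ (hF'.of_subset Set.diff_subset) ?_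
        simp
      have hms : msup (M.edgeSet \ {s(u, v)}) = msup M.edgeSet \ {u, v} := msup_diff hF' he
      have hu' : u ∉ msup (M.edgeSet \ {s(u, v)}) := by rw [hms]; simp
      have hv' : v ∉ msup (M.edgeSet \ {s(u, v)}) := by rw [hms]; simp
      have hkey := KEY0 p hab _ hF hu' hv'
      have := ncard_diff he
      omega
    · exact matchlike_ncard_le (hml_down _ hF' he)
  have hνge : matchingNumber G ≤ matchingNumber G' := by
    refine csSup_le (matchingNumber_nonempty G) ?_
    rintro n ⟨M, hM, rfl⟩
    exact matchlike_ncard_le (hml_up _ (bridge_to hM).1)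
  have hν : matchingNumber G' = matchingNumber G := le_antisymm hνle hνge
  have hgeD : geD G' = geD G := by
    apply Set.eq_of_subset_of_subset
    · intro w hw
      by_contra hwD
      obtain ⟨F', hF', hcard', hw'⟩ := exists_matchlike_of_inessential hw
      by_cases he : s(u, v) ∈ F'
      · have hF : Matchlike G (F' \ {s(u, v)}) := by
          refine hml_down _ (hF'.of_subset Set.diff_subset) ?_
          simp
        have hms : msup (F' \ {s(u, v)}) = msup F' \ {u, v} := msup_diff hF' he
        have hu' : u ∉ msup (F' \ {s(u, v)}) := by rw [hms]; simp
        have hv' : v ∉ msup (F' \ {s(u, v)}) := by rw [hms]; simp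
        have hw2 : w ∉ msup (F' \ {s(u, v)}) :=
          fun h => hw' (msup_mono Set.diff_subset h)
        obtain ⟨F, hF2, hFc, hFw⟩ := KEY1 hwD p hab _ hF hu' hv' hw2
        have h1 : F.ncard ≤ matchingNumber G := matchlike_ncard_le hF2
        have h2 := ncard_diff he
        have h3 : F.ncard = matchingNumber G := by omega
        exact hwD (not_essential_of_matchlike hF2 h3 hFw)
      · exact hwD (not_essential_of_matchlike (hml_down _ hF' he) (by omega) hw')
    · intro w hw
      obtain ⟨F, hF, hcard, hw'⟩ := exists_matchlike_of_inessential hw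
      exact not_essential_of_matchlike (hml_up _ hF) (by omega) hw'
  have hAdj' : ∀ a b : V, G'.Adj a b ↔ G.Adj a b ∨ (a = u ∧ b = v) ∨ (a = v ∧ b = u) := by
    intro a b
    rw [hG', SimpleGraph.sup_adj, SimpleGraph.fromEdgeSet_adj]
    constructor
    · rintro (h | ⟨h, -⟩)
      · exact Or.inl h
      · rw [Set.mem_singleton_iff, Sym2.eq_iff] at h
        exact Or.inr h
    · rintro (h | (⟨rfl, rfl⟩ | ⟨rfl, rfl⟩))
      · exact Or.inl h
      · exact Or.inr ⟨by simp, huv⟩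
      · exact Or.inr ⟨by rw [Set.mem_singleton_iff, Sym2.eq_iff]; tauto, huv.symm⟩
  have hgeA : geA G' = geA G := by
    ext w
    simp only [geA, Set.mem_setOf_eq, hgeD]
    constructor
    · rintro ⟨hwD, x, hxD, hadj'⟩
      rcases (hAdj' w x).mp hadj' with h | (⟨rfl, rfl⟩ | ⟨rfl, rfl⟩)
      · exact ⟨hwD, x, hxD, h⟩
      · exact absurd hu hwD
      · exact absurd hv hwD
    · rintro ⟨hwD, x, hxD, hadj'⟩
      exact ⟨hwD, x, hxD, (hAdj' w x).mpr (Or.inl hadj')⟩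
  have hgeC : geC G' = geC G := by
    ext w
    simp only [geC, Set.mem_setOf_eq, hgeD, hgeA]
  have hreach : ∀ x y : ↥(geD G),
      (G'.induce (geD G)).Reachable x y ↔ (G.induce (geD G)).Reachable x y := by
    intro x y
    constructor
    · rintro ⟨q⟩
      induction q with
      | nil => exact SimpleGraph.Reachable.refl _
      | @cons a c b hac q ih =>
        have : G'.Adj ↑a ↑c := hac
        rcases (hAdj' ↑a ↑c).mp this with h | (⟨ha, hc⟩ | ⟨ha, hc⟩)
        · exact (SimpleGraph.Adj.reachable (by exact h :
            (G.induce (geD G)).Adj a c)).trans ih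
        · have hA : a = ⟨u, hu⟩ := Subtype.ext ha
          have hC : c = ⟨v, hv⟩ := Subtype.ext hc
          subst hA; subst hC
          exact hcomp.trans ih
        · have hA : a = ⟨v, hv⟩ := Subtype.ext ha
          have hC : c = ⟨u, hu⟩ := Subtype.ext hc
          subst hA; subst hC
          exact hcomp.symm.trans ih
    · intro h
      refine h.mono ?_
      intro a b hadj2
      exact (hAdj' ↑a ↑b).mpr (Or.inl hadj2)
  have hcomps : componentSets G' (geD G) = componentSets G (geD G) := by
    ext S
    simp only [componentSets, Set.mem_setOf_eq]
    constructor
    · rintro ⟨c, rfl⟩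
      obtain ⟨x, rfl⟩ := c.exists_rep
      exact ⟨(G.induce (geD G)).connectedComponentMk x,
        congrArg (Set.image Subtype.val) (supp_eq_of_reachable_iff hreach x)⟩
    · rintro ⟨c, rfl⟩
      obtain ⟨x, rfl⟩ := c.exists_rep
      exact ⟨(G'.induce (geD G)).connectedComponentMk x,
        congrArg (Set.image Subtype.val) ((supp_eq_of_reachable_iff hreach x).symm)⟩
  exact ⟨hgeC, hgeA, hgeD, hcomps, hν⟩


end GRT
end

section
/- Let G = (V,E) be a finite simple graph with Gallai–Edmonds decomposition GE(G) = (C,A,D), and let G' be the graph on V whose edge set is E together with all pairs of distinct vertices contained in C, all pairs having at least one endpoint in A, and all pairs of distinct vertices lying in the same connected component of G[D]. Then G is a subgraph of G', GE(G') = GE(G), and ν(G') = ν(G). -/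
namespace GRT

variable {V : Type*}

open scoped Classical

/-- Functional representation of a matching in `H`. -/
structure FM (H : SimpleGraph V) where
  f : V → Option V
  inv : ∀ {u v}, f u = some v → f v = some u
  adj : ∀ {u v}, f u = some v → H.Adj u v

namespace FM

variable {H K : SimpleGraph V}

def verts (m : FM H) : Set V := {v | m.f v ≠ none}

lemma mem_verts_iff {m : FM H} {v : V} : v ∈ m.verts ↔ ∃ w, m.f v = some w := by
  simp [verts, Option.ne_none_iff_exists']

lemma mem_verts_of_eq_some {m : FM H} {u v : V} (h : m.f u = some v) : u ∈ m.verts := by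
  rw [mem_verts_iff]; exact ⟨v, h⟩

lemma partner_mem_verts {m : FM H} {u v : V} (h : m.f u = some v) : v ∈ m.verts :=
  mem_verts_of_eq_some (m.inv h)

lemma ne_of_eq_some {m : FM H} {u v : V} (h : m.f u = some v) : u ≠ v := (m.adj h).ne

lemma not_mem_verts {m : FM H} {v : V} (h : v ∉ m.verts) : m.f v = none := by
  by_contra hc; exact h hc

lemma verts_finite (m : FM H) [Fintype V] : m.verts.Finite := Set.toFinite _

/-- Remove the pair `{a,b}` from a matching. -/
noncomputable def erase2 (m : FM H) {a b : V} (hab : m.f a = some b) : FM H where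
  f v := if v = a ∨ v = b then none else m.f v
  inv := by
    intro u v h
    by_cases hu : u = a ∨ u = b
    · simp [hu] at h
    · rw [if_neg hu] at h
      push_neg at hu
      have hba : m.f b = some a := m.inv hab
      have hva : v ≠ a := by
        rintro rfl
        have : u = b := by
          have := m.inv h; rw [hab] at this; exact (Option.some_injective _ this).symm
        exact hu.2 this
      have hvb : v ≠ b := by
        rintro rfl
        have : u = a := by
          have := m.inv h; rw [hba] at this; exact (Option.some_injective _ this).symm
        exact hu.1 this
      rw [if_neg (by push_neg; exact ⟨hva, hvb⟩)]
      exact m.inv h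
  adj := by
    intro u v h
    by_cases hu : u = a ∨ u = b
    · simp [hu] at h
    · rw [if_neg hu] at h
      exact m.adj h

lemma erase2_f (m : FM H) {a b : V} (hab : m.f a = some b) (v : V) :
    (m.erase2 hab).f v = if v = a ∨ v = b then none else m.f v := rfl

lemma erase2_verts (m : FM H) {a b : V} (hab : m.f a = some b) :
    (m.erase2 hab).verts = m.verts \ {a, b} := by
  ext v
  by_cases hv : v = a ∨ v = b
  · rcases hv with rfl | rfl
    · simp [verts, erase2_f]
    · simp [verts, erase2_f]
  · push_neg at hv
    simp only [verts, Set.mem_setOf_eq, Set.mem_diff, Set.mem_insert_iff,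
      Set.mem_singleton_iff, erase2_f]
    rw [if_neg (by push_neg; exact hv)]
    tauto

/-- Add the pair `{a,b}` to a matching. -/
noncomputable def add2 (m : FM H) {a b : V} (hadj : H.Adj a b) (ha : a ∉ m.verts) (hb : b ∉ m.verts) :
    FM H where
  f v := if v = a then some b else if v = b then some a else m.f v
  inv := by
    intro u v h
    have hne : a ≠ b := hadj.ne
    by_cases hua : u = a
    · subst hua
      rw [if_pos rfl] at h
      obtain rfl : b = v := Option.some_injective _ h
      rw [if_neg hne.symm, if_pos rfl]
    · by_cases hub : u = b
      · subst hub
        rw [if_neg hua, if_pos rfl] at h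
        obtain rfl : a = v := Option.some_injective _ h
        rw [if_pos rfl]
      · rw [if_neg hua, if_neg hub] at h
        have hva : v ≠ a := by
          rintro rfl; exact ha (partner_mem_verts h)
        have hvb : v ≠ b := by
          rintro rfl; exact hb (partner_mem_verts h)
        rw [if_neg hva, if_neg hvb]
        exact m.inv h
  adj := by
    intro u v h
    by_cases hua : u = a
    · subst hua
      rw [if_pos rfl] at h
      obtain rfl : b = v := Option.some_injective _ h
      exact hadj
    · by_cases hub : u = b
      · subst hub
        rw [if_neg hua, if_pos rfl] at h
        obtain rfl : a = v := Option.some_injective _ h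
        exact hadj.symm
      · rw [if_neg hua, if_neg hub] at h
        exact m.adj h

lemma add2_f (m : FM H) {a b : V} (hadj : H.Adj a b) (ha : a ∉ m.verts) (hb : b ∉ m.verts)
    (v : V) : (m.add2 hadj ha hb).f v = if v = a then some b else if v = b then some a else m.f v :=
  rfl

lemma add2_verts (m : FM H) {a b : V} (hadj : H.Adj a b) (ha : a ∉ m.verts) (hb : b ∉ m.verts) :
    (m.add2 hadj ha hb).verts = m.verts ∪ {a, b} := by
  ext v
  by_cases hva : v = a
  · subst hva; simp [verts, add2_f]
  · by_cases hvb : v = b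
    · subst hvb; simp [verts, add2_f, hva]
    · simp only [verts, Set.mem_setOf_eq, Set.mem_union, Set.mem_insert_iff,
        Set.mem_singleton_iff, add2_f, if_neg hva, if_neg hvb]
      tauto

/-- Transfer a matching along a subgraph relation. -/
def ofLE (m : FM H) (h : H ≤ K) : FM K where
  f := m.f
  inv := m.inv
  adj h' := h (m.adj h')

@[simp] lemma ofLE_verts (m : FM H) (h : H ≤ K) : (m.ofLE h).verts = m.verts := rfl

/-- Transfer a matching down when all pairs are edges of a smaller graph. -/
def ofAdj (m : FM K) (h : ∀ {u v}, m.f u = some v → H.Adj u v) : FM H where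
  f := m.f
  inv := m.inv
  adj := h

@[simp] lemma ofAdj_verts (m : FM K) (h : ∀ {u v}, m.f u = some v → H.Adj u v) :
    (m.ofAdj h).verts = m.verts := rfl

end FM

section Bridge

variable {H : SimpleGraph V} [Fintype V]

open FM

/-- The subgraph associated to a functional matching. -/
def FM.toSubgraph (m : FM H) : H.Subgraph where
  verts := m.verts
  Adj u v := m.f u = some v
  adj_sub h := m.adj h
  edge_vert h := FM.mem_verts_of_eq_some h
  symm := ⟨fun u v h => m.inv h⟩

lemma FM.toSubgraph_isMatching (m : FM H) : m.toSubgraph.IsMatching := by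
  intro v hv
  have hv : v ∈ m.verts := hv
  rw [FM.mem_verts_iff] at hv
  obtain ⟨w, hw⟩ := hv
  refine ⟨w, hw, ?_⟩
  intro y hy
  have : m.f v = some y := hy
  rw [hw] at this
  exact (Option.some_injective _ this).symm

lemma FM.toSubgraph_verts (m : FM H) : m.toSubgraph.verts = m.verts := rfl

lemma FM.mem_toSubgraph_edgeSet (m : FM H) {u v : V} :
    s(u, v) ∈ m.toSubgraph.edgeSet ↔ m.f u = some v := by
  rw [SimpleGraph.Subgraph.mem_edgeSet]; rfl

/-- Counting: twice the number of edges is the number of covered vertices. -/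
lemma FM.ncard_edgeSet (m : FM H) : m.toSubgraph.edgeSet.ncard * 2 = m.verts.ncard := by
  classical
  generalize hk : m.verts.ncard = k
  induction k using Nat.strong_induction_on generalizing m with
  | _ k ih =>
    rcases Set.eq_empty_or_nonempty m.verts with he | ⟨v₀, hv₀⟩
    · have h0 : m.toSubgraph.edgeSet = ∅ := by
        ext e
        refine e.ind (fun x y => ?_)
        simp only [Set.mem_empty_iff_false, iff_false]
        intro hxy
        rw [FM.mem_toSubgraph_edgeSet] at hxy
        have := FM.mem_verts_of_eq_some hxy
        rw [he] at this
        exact this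
      rw [h0]
      rw [he] at hk
      simp at hk ⊢
      omega
    · obtain ⟨w₀, hw₀⟩ := FM.mem_verts_iff.1 hv₀
      have hne : v₀ ≠ w₀ := FM.ne_of_eq_some hw₀
      have hw₀v : w₀ ∈ m.verts := FM.partner_mem_verts hw₀
      set m' := m.erase2 hw₀ with hm'
      have hverts' : m'.verts = m.verts \ {v₀, w₀} := FM.erase2_verts m hw₀
      have hcard' : m'.verts.ncard = k - 2 := by
        rw [hverts', Set.ncard_diff (by rintro x (rfl | rfl); exact hv₀; exact hw₀v),
          Set.ncard_pair hne, hk]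
      have hE : m'.toSubgraph.edgeSet = m.toSubgraph.edgeSet \ {s(v₀, w₀)} := by
        ext e
        refine e.ind (fun x y => ?_)
        rw [Set.mem_diff, FM.mem_toSubgraph_edgeSet, FM.mem_toSubgraph_edgeSet,
          FM.erase2_f, Set.mem_singleton_iff]
        constructor
        · intro h
          split at h
          · exact absurd h (by simp)
          · rename_i hx
            push_neg at hx
            refine ⟨h, ?_⟩
            rw [Sym2.eq_iff]
            rintro (⟨rfl, rfl⟩ | ⟨rfl, rfl⟩)
            · exact hx.1 rfl
            · exact hx.2 rfl
        · rintro ⟨h, hne'⟩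
          have hxa : x ≠ v₀ := by
            rintro rfl
            rw [hw₀] at h
            obtain rfl := Option.some_injective _ h.symm
            exact hne' rfl
          have hxb : x ≠ w₀ := by
            rintro rfl
            rw [m.inv hw₀] at h
            obtain rfl := Option.some_injective _ h.symm
            exact hne' (Sym2.eq_swap)
          rw [if_neg (by push_neg; exact ⟨hxa, hxb⟩)]
          exact h
      have hmem : s(v₀, w₀) ∈ m.toSubgraph.edgeSet := (FM.mem_toSubgraph_edgeSet m).2 hw₀
      have hfinE : m.toSubgraph.edgeSet.Finite := Set.toFinite _
      have hcardE : m'.toSubgraph.edgeSet.ncard = m.toSubgraph.edgeSet.ncard - 1 := by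
        rw [hE, Set.ncard_diff_singleton_of_mem hmem]
      have hk2 : 2 ≤ k := by
        rw [← hk]
        have : ({v₀, w₀} : Set V) ⊆ m.verts := by rintro x (rfl | rfl); exact hv₀; exact hw₀v
        calc 2 = ({v₀, w₀} : Set V).ncard := (Set.ncard_pair hne).symm
        _ ≤ m.verts.ncard := Set.ncard_le_ncard this (Set.toFinite _)
      have hEpos : 1 ≤ m.toSubgraph.edgeSet.ncard := by
        rw [Nat.one_le_iff_ne_zero]
        intro h0
        rw [Set.ncard_eq_zero hfinE] at h0
        rw [h0] at hmem
        exact hmem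
      have := ih (k - 2) (by omega) m' hcard'
      rw [hcardE] at this
      omega

lemma FM.even_ncard_verts (m : FM H) : Even m.verts.ncard := by
  refine ⟨m.toSubgraph.edgeSet.ncard, ?_⟩
  rw [← FM.ncard_edgeSet m]; ring

/-- A functional matching from a subgraph matching. -/
noncomputable def FM.ofSubgraph (M : H.Subgraph) (hM : M.IsMatching) : FM H where
  f v := if h : v ∈ M.verts then some (hM h).choose else none
  inv := by
    intro u v h
    dsimp only at h ⊢
    split at h
    · rename_i hu
      obtain rfl := Option.some_injective _ h
      have hadj : M.Adj u ((hM hu).choose) := (hM hu).choose_spec.1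
      have hv : (hM hu).choose ∈ M.verts := M.edge_vert hadj.symm
      rw [dif_pos hv]
      congr 1
      exact ((hM hv).choose_spec.2 u hadj.symm).symm
    · exact absurd h (by simp)
  adj := by
    intro u v h
    dsimp only at h
    split at h
    · rename_i hu
      obtain rfl := Option.some_injective _ h
      exact M.adj_sub (hM hu).choose_spec.1
    · exact absurd h (by simp)

lemma FM.ofSubgraph_verts (M : H.Subgraph) (hM : M.IsMatching) :
    (FM.ofSubgraph M hM).verts = M.verts := by
  ext v
  rw [FM.mem_verts_iff]
  constructor
  · rintro ⟨w, hw⟩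
    by_contra hv
    rw [show (FM.ofSubgraph M hM).f v = if h : v ∈ M.verts then some (hM h).choose else none
      from rfl, dif_neg hv] at hw
    exact absurd hw (by simp)
  · intro hv
    exact ⟨(hM hv).choose, by
      rw [show (FM.ofSubgraph M hM).f v = if h : v ∈ M.verts then some (hM h).choose else none
        from rfl, dif_pos hv]⟩

lemma FM.ofSubgraph_adj_eq (M : H.Subgraph) (hM : M.IsMatching) :
    ∀ u v, (FM.ofSubgraph M hM).f u = some v ↔ M.Adj u v := by
  intro u v
  constructor
  · intro h
    rw [show (FM.ofSubgraph M hM).f u = if h : u ∈ M.verts then some (hM h).choose else none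
      from rfl] at h
    split at h
    · rename_i hu
      obtain rfl := Option.some_injective _ h
      exact (hM hu).choose_spec.1
    · exact absurd h (by simp)
  · intro h
    have hu : u ∈ M.verts := M.edge_vert h
    rw [show (FM.ofSubgraph M hM).f u = if h : u ∈ M.verts then some (hM h).choose else none
      from rfl, dif_pos hu]
    congr 1
    exact ((hM hu).choose_spec.2 v h).symm

lemma FM.ofSubgraph_edgeSet (M : H.Subgraph) (hM : M.IsMatching) :
    (FM.ofSubgraph M hM).toSubgraph.edgeSet = M.edgeSet := by
  ext e
  refine e.ind (fun x y => ?_)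
  rw [SimpleGraph.Subgraph.mem_edgeSet, SimpleGraph.Subgraph.mem_edgeSet]
  exact FM.ofSubgraph_adj_eq M hM x y

/-- twice edges = verts for any subgraph matching -/
lemma two_mul_ncard_edgeSet {M : H.Subgraph} (hM : M.IsMatching) :
    M.edgeSet.ncard * 2 = M.verts.ncard := by
  rw [← FM.ofSubgraph_edgeSet M hM, ← FM.ofSubgraph_verts M hM]
  exact FM.ncard_edgeSet _

lemma matchingSizes_bddAbove :
    BddAbove {n | ∃ M : H.Subgraph, M.IsMatching ∧ M.edgeSet.ncard = n} := by
  refine ⟨(Set.univ : Set (Sym2 V)).ncard, ?_⟩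
  rintro n ⟨M, _, rfl⟩
  exact Set.ncard_le_ncard (Set.subset_univ _) Set.finite_univ

lemma matchingSizes_nonempty :
    ({n | ∃ M : H.Subgraph, M.IsMatching ∧ M.edgeSet.ncard = n} : Set ℕ).Nonempty := by
  refine ⟨(⊥ : H.Subgraph).edgeSet.ncard, ⊥, ?_, rfl⟩
  intro v hv
  simp [SimpleGraph.Subgraph.verts_bot] at hv

lemma exists_maximumMatching : ∃ M : H.Subgraph, IsMaximumMatching H M ∧
    M.edgeSet.ncard = matchingNumber H := by
  have := Nat.sSup_mem (matchingSizes_nonempty (H := H)) matchingSizes_bddAbove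
  obtain ⟨M, hM, hcard⟩ := this
  refine ⟨M, ⟨hM, fun M' hM' => ?_⟩, hcard⟩
  rw [hcard]
  exact le_csSup matchingSizes_bddAbove ⟨M', hM', rfl⟩

lemma IsMaximumMatching.ncard_eq {M : H.Subgraph} (h : IsMaximumMatching H M) :
    M.edgeSet.ncard = matchingNumber H := by
  refine le_antisymm (le_csSup matchingSizes_bddAbove ⟨M, h.1, rfl⟩) ?_
  refine csSup_le matchingSizes_nonempty ?_
  rintro n ⟨M', hM', rfl⟩
  exact h.2 M' hM'

/-- a functional matching of maximum size -/
def IsMaxFM (H : SimpleGraph V) [Fintype V] (m : FM H) : Prop :=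
  m.verts.ncard = 2 * matchingNumber H

lemma FM.ncard_le (m : FM H) : m.verts.ncard ≤ 2 * matchingNumber H := by
  rw [← FM.ncard_edgeSet m, mul_comm]
  have : m.toSubgraph.edgeSet.ncard ≤ matchingNumber H :=
    le_csSup matchingSizes_bddAbove ⟨m.toSubgraph, m.toSubgraph_isMatching, rfl⟩
  omega

lemma exists_isMaxFM : ∃ m : FM H, IsMaxFM H m := by
  obtain ⟨M, hM, hcard⟩ := exists_maximumMatching (H := H)
  refine ⟨FM.ofSubgraph M hM.1, ?_⟩
  unfold IsMaxFM
  rw [FM.ofSubgraph_verts, ← two_mul_ncard_edgeSet hM.1, hcard]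
  ring

lemma IsMaxFM.toMaximum {m : FM H} (hm : IsMaxFM H m) : IsMaximumMatching H m.toSubgraph := by
  refine ⟨m.toSubgraph_isMatching, fun M' hM' => ?_⟩
  have h1 : m.toSubgraph.edgeSet.ncard = matchingNumber H := by
    have := FM.ncard_edgeSet m
    rw [hm] at this
    omega
  rw [h1]
  exact le_csSup matchingSizes_bddAbove ⟨M', hM', rfl⟩

/-- Bridge: membership in `geD` in terms of functional matchings. -/
lemma geD_iff_fm {v : V} : v ∈ geD H ↔ ∃ m : FM H, IsMaxFM H m ∧ v ∉ m.verts := by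
  constructor
  · intro hv
    rw [geD, Set.mem_setOf_eq, Essential] at hv
    push_neg at hv
    obtain ⟨M, hM, hvM⟩ := hv
    refine ⟨FM.ofSubgraph M hM.1, ?_, by rwa [FM.ofSubgraph_verts]⟩
    unfold IsMaxFM
    rw [FM.ofSubgraph_verts, ← two_mul_ncard_edgeSet hM.1, hM.ncard_eq]
    ring
  · rintro ⟨m, hm, hv⟩
    rw [geD, Set.mem_setOf_eq, Essential]
    push_neg
    exact ⟨m.toSubgraph, hm.toMaximum, hv⟩

lemma covered_of_not_geD {v : V} (hv : v ∉ geD H) {m : FM H} (hm : IsMaxFM H m) :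
    v ∈ m.verts := by
  by_contra hc
  exact hv (geD_iff_fm.2 ⟨m, hm, hc⟩)

end Bridge

section SetAux

variable {α : Type*}

lemma aux_set1 (s : Set α) (x y c z : α) (hy : y ∈ s) (hc : c ∈ s) (hxy : x ≠ y) (hxc : x ≠ c) :
    (((s \ {x, y}) \ {c}) ∪ {z}) ∪ {y, c} = (s \ {x}) ∪ {z} := by
  ext v
  simp only [Set.mem_union, Set.mem_diff, Set.mem_insert_iff, Set.mem_singleton_iff]
  by_cases h1 : v = y <;> by_cases h2 : v = c <;> by_cases h3 : v = x <;>
    by_cases h4 : v = z <;> subst_eqs <;> simp_all <;> tauto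

lemma aux_set2 (s : Set α) (x y c z : α) (hy : y ∈ s) (hc : c ∈ s) :
    ((s \ {y, c}) ∪ {c, z}) ∪ {x, y} = s ∪ {x, z} := by
  ext v
  simp only [Set.mem_union, Set.mem_diff, Set.mem_insert_iff, Set.mem_singleton_iff]
  by_cases h1 : v = y <;> by_cases h2 : v = c <;> by_cases h3 : v = x <;>
    by_cases h4 : v = z <;> subst_eqs <;> simp_all <;> tauto

lemma aux_set3 (s : Set α) (x y c z : α) (hy : y ∈ s) (hc : c ∈ s) (hxy : x ≠ y) (hxc : x ≠ c)
    (hzy : z ≠ y) (hzc : z ≠ c) :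
    ((s \ {x, y}) \ {c, z}) ∪ {y, c} = s \ {x, z} := by
  ext v
  simp only [Set.mem_union, Set.mem_diff, Set.mem_insert_iff, Set.mem_singleton_iff]
  by_cases h1 : v = y <;> by_cases h2 : v = c <;> by_cases h3 : v = x <;>
    by_cases h4 : v = z <;> subst_eqs <;> simp_all <;> tauto

lemma aux_set4 (s : Set α) (x y c : α) (hy : y ∈ s) (hxy : x ≠ y) :
    (s \ {x, y}) ∪ {y, c} = (s \ {x}) ∪ {c} := by
  ext v
  simp only [Set.mem_union, Set.mem_diff, Set.mem_insert_iff, Set.mem_singleton_iff]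
  by_cases h1 : v = y <;> by_cases h2 : v = c <;> by_cases h3 : v = x <;>
    subst_eqs <;> simp_all <;> tauto

end SetAux

section Core

variable {H : SimpleGraph V} [Fintype V]

/-- Core exchange lemma: alternating-path exchange between two matchings. -/
lemma core_aux : ∀ (k : ℕ) (m n : FM H) (x : V), n.verts.ncard ≤ k →
    x ∉ m.verts → x ∈ n.verts →
    ((∃ (n₁ : FM H) (z : V), z ∉ n.verts ∧ z ∈ m.verts ∧
        n₁.verts = (n.verts \ {x}) ∪ {z}) ∨
     (∃ (m₁ n₁ : FM H) (z : V), z ∉ m.verts ∧ z ≠ x ∧ z ∈ n.verts ∧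
        m₁.verts = m.verts ∪ {x, z} ∧ n₁.verts = n.verts \ {x, z})) := by
  intro k
  induction k with
  | zero =>
    intro m n x hk hxm hxn
    exfalso
    have : 0 < n.verts.ncard := (Set.ncard_pos (Set.toFinite _)).2 ⟨x, hxn⟩
    omega
  | succ k ih =>
    intro m n x hk hxm hxn
    obtain ⟨y, hxy⟩ := FM.mem_verts_iff.1 hxn
    have hyx : n.f y = some x := n.inv hxy
    have hxyne : x ≠ y := FM.ne_of_eq_some hxy
    have hyn : y ∈ n.verts := FM.partner_mem_verts hxy
    have hAdjxy : H.Adj x y := n.adj hxy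
    rcases hc : m.f y with _ | c
    · -- y is m-exposed : direct (b)-outcome
      have hym : y ∉ m.verts := by simp [FM.verts, hc]
      right
      refine ⟨m.add2 hAdjxy hxm hym, n.erase2 hxy, y, hym, hxyne.symm, hyn, ?_, ?_⟩
      · rw [FM.add2_verts]
      · rw [FM.erase2_verts]
    · -- y is matched to c in m
      have hcy : m.f c = some y := m.inv hc
      have hAdjyc : H.Adj y c := m.adj hc
      have hyc_ne : y ≠ c := FM.ne_of_eq_some hc
      have hcm : c ∈ m.verts := FM.mem_verts_of_eq_some hcy
      have hym : y ∈ m.verts := FM.mem_verts_of_eq_some hc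
      have hcx : c ≠ x := by rintro rfl; exact hxm hcm
      have hmtv : (m.erase2 hc).verts = m.verts \ {y, c} := FM.erase2_verts m hc
      have hntv : (n.erase2 hxy).verts = n.verts \ {x, y} := FM.erase2_verts n hxy
      have hcmt : c ∉ (m.erase2 hc).verts := by rw [hmtv]; simp
      have hxysub : ({x, y} : Set V) ⊆ n.verts := by rintro v (rfl | rfl); exact hxn; exact hyn
      have hntcard : (n.erase2 hxy).verts.ncard = n.verts.ncard - 2 := by
        rw [hntv, Set.ncard_diff hxysub (Set.toFinite _), Set.ncard_pair hxyne]
      have hncard2 : 2 ≤ n.verts.ncard := by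
        calc 2 = ({x, y} : Set V).ncard := (Set.ncard_pair hxyne).symm
        _ ≤ n.verts.ncard := Set.ncard_le_ncard hxysub (Set.toFinite _)
      by_cases hcn : c ∈ n.verts
      · -- recurse
        have hcnt : c ∈ (n.erase2 hxy).verts := by
          rw [hntv]; exact ⟨hcn, by simp [hcx, hyc_ne.symm]⟩
        have hle : (n.erase2 hxy).verts.ncard ≤ k := by omega
        rcases ih (m.erase2 hc) (n.erase2 hxy) c hle hcmt hcnt with
          ⟨n₁', z, hznt, hzmt, hv⟩ | ⟨m₁', n₁', z, hzmt, hzc, hznt, hm', hn'⟩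
        · -- LEFT from recursion
          rw [hmtv] at hzmt
          have hzm : z ∈ m.verts := hzmt.1
          have hzy : z ≠ y := by rintro rfl; exact hzmt.2 (by simp)
          have hzc : z ≠ c := by rintro rfl; exact hzmt.2 (by simp)
          have hzx : z ≠ x := by rintro rfl; exact hxm hzm
          have hzn : z ∉ n.verts := by
            intro hzn
            exact hznt (by rw [hntv]; exact ⟨hzn, by simp [hzx, hzy]⟩)
          have hyn₁ : y ∉ n₁'.verts := by
            rw [hv, hntv]
            intro hmem
            rcases hmem with ⟨⟨-, h⟩, -⟩ | h
            · exact h (Or.inr rfl)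
            · exact hzy (Set.mem_singleton_iff.1 h).symm
          have hcn₁ : c ∉ n₁'.verts := by
            rw [hv]
            intro hmem
            rcases hmem with ⟨-, h⟩ | h
            · exact h rfl
            · exact hzc (Set.mem_singleton_iff.1 h).symm
          left
          refine ⟨n₁'.add2 hAdjyc hyn₁ hcn₁, z, hzn, hzm, ?_⟩
          rw [FM.add2_verts, hv, hntv]
          exact aux_set1 n.verts x y c z hyn hcn hxyne hcx.symm
        · -- RIGHT from recursion
          rw [hmtv] at hzmt
          rw [hntv] at hznt
          have hzn : z ∈ n.verts := hznt.1
          have hzx : z ≠ x := by intro h; exact hznt.2 (by simp [h])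
          have hzy : z ≠ y := by intro h; exact hznt.2 (by simp [h])
          have hzm : z ∉ m.verts := by
            intro hzm'
            exact hzmt ⟨hzm', by simp [hzy, hzc]⟩
          have hxm₁ : x ∉ m₁'.verts := by
            rw [hm', hmtv]
            intro hmem
            rcases hmem with ⟨h, -⟩ | h
            · exact hxm h
            · rcases h with h | h
              · exact hcx h.symm
              · exact hzx (Set.mem_singleton_iff.1 h).symm
          have hym₁ : y ∉ m₁'.verts := by
            rw [hm', hmtv]
            intro hmem
            rcases hmem with ⟨-, h⟩ | h
            · exact h (Or.inl rfl)
            · rcases h with h | h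
              · exact hyc_ne h
              · exact hzy (Set.mem_singleton_iff.1 h).symm
          have hyn₁ : y ∉ n₁'.verts := by
            rw [hn', hntv]
            rintro ⟨⟨-, h⟩, -⟩
            exact h (Or.inr rfl)
          have hcn₁ : c ∉ n₁'.verts := by
            rw [hn']
            rintro ⟨-, h⟩
            exact h (Or.inl rfl)
          right
          refine ⟨m₁'.add2 hAdjxy hxm₁ hym₁, n₁'.add2 hAdjyc hyn₁ hcn₁, z, hzm, hzx, hzn, ?_, ?_⟩
          · rw [FM.add2_verts, hm', hmtv]
            exact aux_set2 m.verts x y c z hym hcm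
          · rw [FM.add2_verts, hn', hntv]
            exact aux_set3 n.verts x y c z hyn hcn hxyne hcx.symm hzy hzc
      · -- c is n-exposed : direct (a)-outcome
        have hynt : y ∉ (n.erase2 hxy).verts := by rw [hntv]; simp
        have hcnt : c ∉ (n.erase2 hxy).verts := by rw [hntv]; exact fun h => hcn h.1
        left
        refine ⟨(n.erase2 hxy).add2 hAdjyc hynt hcnt, c, hcn, hcm, ?_⟩
        rw [FM.add2_verts, hntv]
        exact aux_set4 n.verts x y c hyn hxyne

/-- Core exchange lemma, packaged. -/
lemma core (m n : FM H) {x : V} (hxm : x ∉ m.verts) (hxn : x ∈ n.verts) :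
    ((∃ (n₁ : FM H) (z : V), z ∉ n.verts ∧ z ∈ m.verts ∧
        n₁.verts = (n.verts \ {x}) ∪ {z}) ∨
     (∃ (m₁ n₁ : FM H) (z : V), z ∉ m.verts ∧ z ≠ x ∧ z ∈ n.verts ∧
        m₁.verts = m.verts ∪ {x, z} ∧ n₁.verts = n.verts \ {x, z})) :=
  core_aux n.verts.ncard m n x le_rfl hxm hxn

end Core


section NcardAux

variable {α : Type*}

lemma ncard_exchange_eq {s : Set α} {x z : α} (hx : x ∈ s) (hz : z ∉ s) (hs : s.Finite) :
    ((s \ {x}) ∪ {z}).ncard = s.ncard := by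
  rw [Set.union_singleton, Set.ncard_insert_of_notMem (by simp [hz]) ((hs.diff)),
    Set.ncard_diff_singleton_of_mem hx]
  have : 0 < s.ncard := (Set.ncard_pos hs).2 ⟨x, hx⟩
  omega

lemma ncard_union_two {s : Set α} {x z : α} (hx : x ∉ s) (hz : z ∉ s) (hxz : x ≠ z)
    (hs : s.Finite) : (s ∪ {x, z}).ncard = s.ncard + 2 := by
  have h1 : s ∪ {x, z} = insert x (insert z s) := by
    ext v; simp only [Set.mem_union, Set.mem_insert_iff, Set.mem_singleton_iff]; tauto
  have h2 : x ∉ insert z s := by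
    simp only [Set.mem_insert_iff, not_or]; exact ⟨hxz, hx⟩
  rw [h1, Set.ncard_insert_of_notMem h2 (hs.insert z), Set.ncard_insert_of_notMem hz hs]

lemma ncard_diff_two {s : Set α} {x z : α} (hx : x ∈ s) (hz : z ∈ s) (hxz : x ≠ z)
    (hs : s.Finite) : (s \ {x, z}).ncard = s.ncard - 2 := by
  rw [Set.ncard_diff (by rintro v (rfl | rfl); exact hx; exact hz)
      ((Set.finite_singleton z).insert x), Set.ncard_pair hxz]

end NcardAux

section NoPath

variable {H : SimpleGraph V} [Fintype V]

lemma induce_adj_val {s : Set V} {a b : s} (h : (H.induce s).Adj a b) : H.Adj a b := by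
  simpa using h

/-- No maximum matching exposes two distinct vertices joined by a walk inside `G[D]`. -/
lemma noPath {s t : ↥(geD H)} (p : (H.induce (geD H)).Walk s t) :
    (s : V) ≠ (t : V) → ∀ m : FM H, IsMaxFM H m →
      (s : V) ∉ m.verts → (t : V) ∉ m.verts → False := by
  induction p with
  | nil => intro h; exact absurd rfl h
  | @cons s y t hadj q ih =>
    intro hst m hm hs ht
    have hAdj : H.Adj s y := induce_adj_val hadj
    have hsy : (s : V) ≠ (y : V) := hAdj.ne
    by_cases hyt : (y : V) = (t : V)
    · -- s and t adjacent, both exposed: augment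
      have hAdj' : H.Adj s t := hyt ▸ hAdj
      have := FM.ncard_le (m.add2 hAdj' hs ht)
      rw [FM.add2_verts, ncard_union_two hs ht hst (Set.toFinite _), hm] at this
      omega
    by_cases hym : (y : V) ∈ m.verts
    · -- swap to get a maximum matching exposing y
      obtain ⟨n, hn, hyn⟩ := geD_iff_fm.1 y.2
      rcases core n m hyn hym with ⟨m₁, z, hzm, hzn, hv⟩ | ⟨m₁, n₁, z, hzn', hzy, hzm', hv, -⟩
      · -- LEFT : m₁ is max and exposes y
        have hm₁ : IsMaxFM H m₁ := by
          unfold IsMaxFM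
          rw [hv, ncard_exchange_eq hym hzm (Set.toFinite _), hm]
        have hym₁ : (y : V) ∉ m₁.verts := by
          rw [hv]
          rintro (⟨-, h⟩ | h)
          · exact h rfl
          · exact hyn (by rw [Set.mem_singleton_iff.1 h]; exact hzn)
        by_cases hzs : z = (s : V)
        · -- recurse along the walk from y
          refine ih (fun h => hyt h) m₁ hm₁ hym₁ ?_
          rw [hv]
          rintro (⟨h, -⟩ | h)
          · exact ht h
          · rw [Set.mem_singleton_iff] at h
            exact hst (hzs ▸ h).symm
        · -- s and y both exposed and adjacent : augment
          have hsm₁ : (s : V) ∉ m₁.verts := by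
            rw [hv]
            rintro (⟨h, -⟩ | h)
            · exact hs h
            · exact hzs (Set.mem_singleton_iff.1 h).symm
          have := FM.ncard_le (m₁.add2 hAdj hsm₁ hym₁)
          rw [FM.add2_verts, ncard_union_two hsm₁ hym₁ hsy (Set.toFinite _), hm₁] at this
          omega
      · -- RIGHT : impossible, matching bigger than maximum
        have := FM.ncard_le m₁
        rw [hv, ncard_union_two hyn (fun h => hzn' h) (fun h => hzy h.symm) (Set.toFinite _),
          hn] at this
        omega
    · -- s and y both exposed and adjacent : augment
      have := FM.ncard_le (m.add2 hAdj hs hym)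
      rw [FM.add2_verts, ncard_union_two hs hym hsy (Set.toFinite _), hm] at this
      omega

lemma noPath' {u v : V} (hu : u ∈ geD H) (hv : v ∈ geD H)
    (hr : (H.induce (geD H)).Reachable ⟨u, hu⟩ ⟨v, hv⟩) (huv : u ≠ v)
    {m : FM H} (hm : IsMaxFM H m) (hum : u ∉ m.verts) (hvm : v ∉ m.verts) : False := by
  obtain ⟨p⟩ := hr
  exact noPath p huv m hm hum hvm

end NoPath

section AddEdge

variable [Fintype V]

/-- `H` plus the single edge `uv`. -/
def addE (H : SimpleGraph V) (u v : V) : SimpleGraph V :=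
  H ⊔ SimpleGraph.fromEdgeSet {s(u, v)}

lemma addE_adj {H : SimpleGraph V} {u v a b : V} :
    (addE H u v).Adj a b ↔ H.Adj a b ∨ ((a = u ∧ b = v ∨ a = v ∧ b = u) ∧ a ≠ b) := by
  unfold addE
  rw [SimpleGraph.sup_adj, SimpleGraph.fromEdgeSet_adj, Set.mem_singleton_iff, Sym2.eq_iff]

lemma le_addE (H : SimpleGraph V) (u v : V) : H ≤ addE H u v := le_sup_left

lemma addE_comm (H : SimpleGraph V) (u v : V) : addE H u v = addE H v u := by
  unfold addE
  rw [Sym2.eq_swap]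

lemma addE_adj_self {H : SimpleGraph V} {u v : V} (huv : u ≠ v) : (addE H u v).Adj u v := by
  rw [addE_adj]
  exact Or.inr ⟨Or.inl ⟨rfl, rfl⟩, huv⟩

variable {H : SimpleGraph V} {u v : V}

/-- Transfer a matching of `H + uv` not using `uv` down to `H`. -/
noncomputable def FM.downA (m : FM (addE H u v)) (h : ¬ m.f u = some v) : FM H :=
  m.ofAdj (by
    intro a b hab
    rcases addE_adj.1 (m.adj hab) with h' | ⟨h', hne⟩
    · exact h'
    · exfalso
      rcases h' with ⟨rfl, rfl⟩ | ⟨rfl, rfl⟩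
      · exact h hab
      · exact h (m.inv hab))

@[simp] lemma FM.downA_verts (m : FM (addE H u v)) (h : ¬ m.f u = some v) :
    (m.downA h).verts = m.verts := rfl

/-- Transfer a matching of `H + uv` using `uv` down to `H`, removing the pair. -/
noncomputable def FM.downB (m : FM (addE H u v)) (h : m.f u = some v) : FM H :=
  (m.erase2 h).ofAdj (by
    intro a b hab
    rw [FM.erase2_f] at hab
    split at hab
    · exact absurd hab (by simp)
    · rename_i ha
      push_neg at ha
      have hb : b ≠ u ∧ b ≠ v := by
        constructor
        · rintro rfl
          have := m.inv hab
          rw [h] at this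
          exact ha.2 (Option.some_injective _ this).symm
        · rintro rfl
          have := m.inv hab
          rw [m.inv h] at this
          exact ha.1 (Option.some_injective _ this).symm
      rcases addE_adj.1 (m.adj hab) with h' | ⟨h', _⟩
      · exact h'
      · exfalso
        rcases h' with ⟨rfl, rfl⟩ | ⟨rfl, rfl⟩
        · exact ha.1 rfl
        · exact ha.2 rfl)

lemma FM.downB_verts (m : FM (addE H u v)) (h : m.f u = some v) :
    (m.downB h).verts = m.verts \ {u, v} := FM.erase2_verts m h

lemma matchingNumber_mono {G K : SimpleGraph V} (h : G ≤ K) :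
    matchingNumber G ≤ matchingNumber K := by
  refine csSup_le matchingSizes_nonempty ?_
  rintro n ⟨M, hM, rfl⟩
  have h2 : (FM.ofSubgraph M hM).verts.ncard = M.edgeSet.ncard * 2 := by
    rw [FM.ofSubgraph_verts, ← two_mul_ncard_edgeSet hM]
  have := FM.ncard_le ((FM.ofSubgraph M hM).ofLE h)
  rw [FM.ofLE_verts, h2] at this
  omega

/-- Allowed single-edge completions. -/
def Allowed (H : SimpleGraph V) (u v : V) : Prop :=
  (u ∉ geD H ∧ v ∉ geD H) ∨ u ∈ geA H ∨ v ∈ geA H ∨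
    (∃ (hu : u ∈ geD H) (hv : v ∈ geD H),
      (H.induce (geD H)).Reachable ⟨u, hu⟩ ⟨v, hv⟩)

lemma Allowed.symm {H : SimpleGraph V} {u v : V} (h : Allowed H u v) : Allowed H v u := by
  unfold Allowed at *
  rcases h with ⟨h1, h2⟩ | h | h | ⟨hu, hv, hr⟩
  · exact Or.inl ⟨h2, h1⟩
  · exact Or.inr (Or.inr (Or.inl h))
  · exact Or.inr (Or.inl h)
  · exact Or.inr (Or.inr (Or.inr ⟨hv, hu, hr.symm⟩))

lemma geA_not_geD {H : SimpleGraph V} {w : V} (h : w ∈ geA H) : w ∉ geD H := h.1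

/-- Adding an allowed edge preserves the matching number. -/
lemma matchingNumber_addE {H : SimpleGraph V} {u v : V} (hne : u ≠ v)
    (hall : Allowed H u v) : matchingNumber (addE H u v) = matchingNumber H := by
  have h1 : matchingNumber H ≤ matchingNumber (addE H u v) :=
    matchingNumber_mono (le_addE H u v)
  obtain ⟨m, hm⟩ := exists_isMaxFM (H := addE H u v)
  by_cases hp : m.f u = some v
  · have hverts : (m.downB hp).verts = m.verts \ {u, v} := FM.downB_verts m hp
    have humem : u ∈ m.verts := FM.mem_verts_of_eq_some hp
    have hvmem : v ∈ m.verts := FM.partner_mem_verts hp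
    have hcard : (m.downB hp).verts.ncard = m.verts.ncard - 2 := by
      rw [hverts, ncard_diff_two humem hvmem hne (Set.toFinite _)]
    have hle := FM.ncard_le (m.downB hp)
    rw [hcard, hm] at hle
    have hK1 : matchingNumber (addE H u v) ≤ matchingNumber H + 1 := by omega
    have hKne : matchingNumber (addE H u v) ≠ matchingNumber H + 1 := by
      intro hK
      have hmax : IsMaxFM H (m.downB hp) := by
        unfold IsMaxFM
        rw [hcard, hm, hK]
        ring_nf
        omega
      have hu' : u ∉ (m.downB hp).verts := by rw [hverts]; simp
      have hv' : v ∉ (m.downB hp).verts := by rw [hverts]; simp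
      have hud : u ∈ geD H := geD_iff_fm.2 ⟨_, hmax, hu'⟩
      have hvd : v ∈ geD H := geD_iff_fm.2 ⟨_, hmax, hv'⟩
      rcases hall with ⟨h', -⟩ | h' | h' | ⟨hu, hv, hr⟩
      · exact h' hud
      · exact h'.1 hud
      · exact h'.1 hvd
      · exact noPath' hu hv hr hne hmax hu' hv'
    omega
  · have := FM.ncard_le (m.downA hp)
    rw [FM.downA_verts, hm] at this
    omega

/-- `geD` grows (in fact is preserved) when adding an allowed edge. -/
lemma geD_le_addE {H : SimpleGraph V} {u v : V} (hne : u ≠ v) (hall : Allowed H u v) :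
    geD H ⊆ geD (addE H u v) := by
  intro w hw
  obtain ⟨m, hm, hwm⟩ := geD_iff_fm.1 hw
  refine geD_iff_fm.2 ⟨m.ofLE (le_addE H u v), ?_, hwm⟩
  unfold IsMaxFM
  rw [FM.ofLE_verts, hm, matchingNumber_addE hne hall]

end AddEdge

section Stability

variable [Fintype V]

/-- Delete all edges at a vertex. -/
def delV (H : SimpleGraph V) (a : V) : SimpleGraph V := H.deleteEdges {e | a ∈ e}

lemma delV_adj {H : SimpleGraph V} {a x y : V} :
    (delV H a).Adj x y ↔ H.Adj x y ∧ x ≠ a ∧ y ≠ a := by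
  unfold delV
  rw [SimpleGraph.deleteEdges_adj]
  simp only [Set.mem_setOf_eq, Sym2.mem_iff, not_or]
  constructor
  · rintro ⟨h1, h2, h3⟩; exact ⟨h1, fun h => h2 h.symm, fun h => h3 h.symm⟩
  · rintro ⟨h1, h2, h3⟩; exact ⟨h1, fun h => h2 h.symm, fun h => h3 h.symm⟩

lemma delV_le {H : SimpleGraph V} {a : V} : delV H a ≤ H := SimpleGraph.deleteEdges_le _

lemma delV_isolated {H : SimpleGraph V} {a : V} (m : FM (delV H a)) : a ∉ m.verts := by
  rw [FM.mem_verts_iff]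
  rintro ⟨t, ht⟩
  exact (delV_adj.1 (m.adj ht)).2.1 rfl

lemma delV_not_mem {H : SimpleGraph V} {a b : V} (m : FM (delV H a)) {x : V}
    (hx : x ∈ m.verts) : x ≠ a := by
  rintro rfl; exact delV_isolated m hx

/-- Erasing the pair at `a` from an `H`-matching covering `a` yields a `delV H a`-matching. -/
noncomputable def FM.delDown {H : SimpleGraph V} {a pa : V} (m : FM H)
    (hpa : m.f a = some pa) : FM (delV H a) :=
  (m.erase2 hpa).ofAdj (by
    intro x y hxy
    rw [FM.erase2_f] at hxy
    split at hxy
    · exact absurd hxy (by simp)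
    · rename_i hx
      push_neg at hx
      have hya : y ≠ a := by
        rintro rfl
        have := m.inv hxy
        rw [hpa] at this
        exact hx.2 (Option.some_injective _ this).symm
      exact delV_adj.2 ⟨m.adj hxy, hx.1, hya⟩)

lemma FM.delDown_verts {H : SimpleGraph V} {a pa : V} (m : FM H) (hpa : m.f a = some pa) :
    (m.delDown hpa).verts = m.verts \ {a, pa} := FM.erase2_verts m hpa

variable {H : SimpleGraph V} {a : V}

/-- Stability, numerical part. -/
lemma delV_matchingNumber (hEa : a ∉ geD H) :
    matchingNumber (delV H a) + 1 = matchingNumber H := by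
  obtain ⟨m, hm⟩ := exists_isMaxFM (H := H)
  have ham : a ∈ m.verts := covered_of_not_geD hEa hm
  obtain ⟨pa, hpa⟩ := FM.mem_verts_iff.1 ham
  have hpam : pa ∈ m.verts := FM.partner_mem_verts hpa
  have hnepa : a ≠ pa := FM.ne_of_eq_some hpa
  have hcard : (m.delDown hpa).verts.ncard = m.verts.ncard - 2 := by
    rw [FM.delDown_verts, ncard_diff_two ham hpam hnepa (Set.toFinite _)]
  have hge := FM.ncard_le (m.delDown hpa)
  rw [hcard, hm] at hge
  obtain ⟨m₁, hm₁⟩ := exists_isMaxFM (H := delV H a)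
  have hle := FM.ncard_le (m₁.ofLE delV_le)
  rw [FM.ofLE_verts, hm₁] at hle
  have hneq : matchingNumber (delV H a) ≠ matchingNumber H := by
    intro h
    refine hEa (geD_iff_fm.2 ⟨m₁.ofLE delV_le, ?_, ?_⟩)
    · unfold IsMaxFM; rw [FM.ofLE_verts, hm₁, h]
    · rw [FM.ofLE_verts]; exact delV_isolated m₁
  omega

/-- Stability: inessential vertices stay inessential after deleting an essential vertex. -/
lemma delV_geD_subset (hEa : a ∉ geD H) {w : V} (hw : w ∈ geD H) : w ∈ geD (delV H a) := by
  obtain ⟨m, hm, hwm⟩ := geD_iff_fm.1 hw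
  have ham : a ∈ m.verts := covered_of_not_geD hEa hm
  obtain ⟨pa, hpa⟩ := FM.mem_verts_iff.1 ham
  have hpam : pa ∈ m.verts := FM.partner_mem_verts hpa
  have hnepa : a ≠ pa := FM.ne_of_eq_some hpa
  refine geD_iff_fm.2 ⟨m.delDown hpa, ?_, ?_⟩
  · unfold IsMaxFM
    rw [FM.delDown_verts, ncard_diff_two ham hpam hnepa (Set.toFinite _), hm]
    have := delV_matchingNumber (H := H) hEa
    omega
  · rw [FM.delDown_verts]
    exact fun h => hwm h.1

lemma delV_a_geD (hEa : a ∉ geD H) : a ∈ geD (delV H a) := by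
  obtain ⟨m₁, hm₁⟩ := exists_isMaxFM (H := delV H a)
  exact geD_iff_fm.2 ⟨m₁, hm₁, delV_isolated m₁⟩

/-- Stability, hard direction: essential vertices stay essential after deleting an `A`-vertex. -/
lemma delV_essential (ha : a ∈ geA H) {w : V} (hwD : w ∉ geD H) (hwa : w ≠ a) :
    w ∉ geD (delV H a) := by
  intro hcontra
  obtain ⟨m', hm', hwm'⟩ := geD_iff_fm.1 hcontra
  set m'' := m'.ofLE (delV_le (H := H) (a := a)) with hm''def
  have hm''card : m''.verts.ncard = 2 * matchingNumber H - 2 := by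
    rw [hm''def, FM.ofLE_verts, hm']
    have := delV_matchingNumber (H := H) ha.1
    omega
  obtain ⟨d, hdD, hadj_ad⟩ := ha.2
  have hda : d ≠ a := hadj_ad.ne'
  obtain ⟨nd, hnd, hdnd⟩ := geD_iff_fm.1 hdD
  have hwnd : w ∈ nd.verts := covered_of_not_geD hwD hnd
  have hand : a ∈ nd.verts := covered_of_not_geD ha.1 hnd
  have hwm'' : w ∉ m''.verts := by rw [hm''def, FM.ofLE_verts]; exact hwm'
  have ham'' : a ∉ m''.verts := by rw [hm''def, FM.ofLE_verts]; exact delV_isolated m'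
  rcases core m'' nd hwm'' hwnd with ⟨n₁, z, hzn, hzm, hv⟩ |
    ⟨m₁, n₁, z, hzm', hzw, hzn', hm₁v, hn₁v⟩
  · -- n₁ is maximum and exposes w
    refine hwD (geD_iff_fm.2 ⟨n₁, ?_, ?_⟩)
    · unfold IsMaxFM
      rw [hv, ncard_exchange_eq hwnd hzn (Set.toFinite _), hnd]
    · rw [hv]
      rintro (⟨-, h⟩ | h)
      · exact h rfl
      · refine hwm'' ?_
        rw [Set.mem_singleton_iff.1 h]
        exact hzm
  · by_cases hza : z = a
    · subst hza
      have hdn₁ : d ∉ n₁.verts := by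
        rw [hn₁v]
        exact fun h => hdnd h.1
      have hzn₁ : z ∉ n₁.verts := by
        rw [hn₁v]
        rintro ⟨-, h⟩
        exact h (Or.inr rfl)
      refine hwD (geD_iff_fm.2 ⟨n₁.add2 hadj_ad hzn₁ hdn₁, ?_, ?_⟩)
      · have hnd' : nd.verts.ncard = 2 * matchingNumber H := hnd
        have hpos : 0 < nd.verts.ncard := (Set.ncard_pos (Set.toFinite _)).2 ⟨w, hwnd⟩
        unfold IsMaxFM
        rw [FM.add2_verts, ncard_union_two hzn₁ hdn₁ (Ne.symm hda) (Set.toFinite _), hn₁v,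
          ncard_diff_two hwnd hand hwa (Set.toFinite _)]
        omega
      · rw [FM.add2_verts, hn₁v]
        rintro (⟨-, h⟩ | h)
        · exact h (Or.inl rfl)
        · rcases h with h | h
          · exact hwa h
          · exact hdnd (by rw [← Set.mem_singleton_iff.1 h]; exact hwnd)
    · -- m₁ is maximum and exposes a
      refine ha.1 (geD_iff_fm.2 ⟨m₁, ?_, ?_⟩)
      · have hnd' : nd.verts.ncard = 2 * matchingNumber H := hnd
        have hpos : 0 < nd.verts.ncard := (Set.ncard_pos (Set.toFinite _)).2 ⟨w, hwnd⟩
        unfold IsMaxFM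
        rw [hm₁v, ncard_union_two hwm'' hzm' (Ne.symm hzw) (Set.toFinite _), hm''card]
        omega
      · rw [hm₁v]
        rintro (h | h)
        · exact ham'' h
        · rcases h with h | h
          · exact hwa h.symm
          · exact hza (Set.mem_singleton_iff.1 h).symm

/-- Stability: the `D`-set after deleting an `A`-vertex. -/
lemma delV_geD_eq (ha : a ∈ geA H) : geD (delV H a) = geD H ∪ {a} := by
  ext w
  constructor
  · intro hw
    by_cases hwa : w = a
    · exact Or.inr hwa
    · by_contra hc
      rw [Set.mem_union] at hc
      push_neg at hc
      exact delV_essential ha hc.1 hwa hw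
  · rintro (hw | hw)
    · exact delV_geD_subset ha.1 hw
    · rw [Set.mem_singleton_iff.1 hw]
      exact delV_a_geD ha.1

/-- Stability: the `A`-set after deleting an `A`-vertex. -/
lemma delV_geA_eq (ha : a ∈ geA H) : geA (delV H a) = geA H \ {a} := by
  ext x
  constructor
  · rintro ⟨hxD, d', hd'D, hadj⟩
    rw [delV_adj] at hadj
    have hxa : x ≠ a := hadj.2.1
    have hd'a : d' ≠ a := hadj.2.2
    have hxDH : x ∉ geD H := by
      intro h
      exact hxD (delV_geD_subset ha.1 h)
    have hd'DH : d' ∈ geD H := by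
      rcases (delV_geD_eq ha ▸ hd'D) with h | h
      · exact h
      · exact absurd (Set.mem_singleton_iff.1 h) hd'a
    exact ⟨⟨hxDH, d', hd'DH, hadj.1⟩, hxa⟩
  · rintro ⟨⟨hxD, d', hd'D, hadj⟩, hxa⟩
    rw [Set.mem_singleton_iff] at hxa
    refine ⟨delV_essential ha hxD hxa, d', ?_, ?_⟩
    · rw [delV_geD_eq ha]; exact Or.inl hd'D
    · rw [delV_adj]
      refine ⟨hadj, hxa, ?_⟩
      rintro rfl
      exact ha.1 hd'D

end Stability

section PerEdgeEasy

variable [Fintype V] {H : SimpleGraph V} {u v : V}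

lemma induce_adj_of {s : Set V} {x y : V} (hx : x ∈ s) (hy : y ∈ s) (h : H.Adj x y) :
    (H.induce s).Adj ⟨x, hx⟩ ⟨y, hy⟩ := by simpa using h

lemma reachable_induce_mono {H' : SimpleGraph V} {s s' : Set V} (hs : s ⊆ s')
    (hadj : ∀ {x y : V}, x ∈ s → y ∈ s → H.Adj x y → H'.Adj x y) {x y : ↥s}
    (h : (H.induce s).Reachable x y) :
    (H'.induce s').Reachable ⟨x.1, hs x.2⟩ ⟨y.1, hs y.2⟩ := by
  obtain ⟨p⟩ := h
  induction p with
  | nil => exact SimpleGraph.Reachable.refl _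
  | @cons a b c hadj' q ih =>
    refine SimpleGraph.Reachable.trans ?_ ih
    exact SimpleGraph.Adj.reachable
      (induce_adj_of (hs a.2) (hs b.2) (hadj a.2 b.2 (induce_adj_val hadj')))

/-- Easy case: both endpoints essential. -/
lemma geD_addE_case1 (hne : u ≠ v) (hu : u ∉ geD H) (hv : v ∉ geD H) :
    geD (addE H u v) ⊆ geD H := by
  intro w hw
  by_contra hwD
  have hall : Allowed H u v := Or.inl ⟨hu, hv⟩
  have hν := matchingNumber_addE hne hall
  obtain ⟨m, hm, hwm⟩ := geD_iff_fm.1 hw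
  by_cases hp : m.f u = some v
  · have humem : u ∈ m.verts := FM.mem_verts_of_eq_some hp
    have hvmem : v ∈ m.verts := FM.partner_mem_verts hp
    have hwu : w ≠ u := by rintro rfl; exact hwm humem
    have hwv : w ≠ v := by rintro rfl; exact hwm hvmem
    have hm2v : (m.downB hp).verts = m.verts \ {u, v} := FM.downB_verts m hp
    have hm2card : (m.downB hp).verts.ncard = 2 * matchingNumber H - 2 := by
      rw [hm2v, ncard_diff_two humem hvmem hne (Set.toFinite _), hm, hν]
    obtain ⟨n₀, hn₀⟩ := exists_isMaxFM (H := H)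
    have hwn₀ : w ∈ n₀.verts := covered_of_not_geD hwD hn₀
    have hun₀ : u ∈ n₀.verts := covered_of_not_geD hu hn₀
    have hvn₀ : v ∈ n₀.verts := covered_of_not_geD hv hn₀
    have hwm₂ : w ∉ (m.downB hp).verts := by rw [hm2v]; exact fun h => hwm h.1
    have hum₂ : u ∉ (m.downB hp).verts := by rw [hm2v]; simp
    have hvm₂ : v ∉ (m.downB hp).verts := by rw [hm2v]; simp
    rcases core (m.downB hp) n₀ hwm₂ hwn₀ with ⟨n₁, z, hzn, hzm, hv'⟩ |
      ⟨m₁, n₁, z, hzm₂, hzw, hzn₀, hm₁v, -⟩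
    · refine hwD (geD_iff_fm.2 ⟨n₁, ?_, ?_⟩)
      · unfold IsMaxFM
        rw [hv', ncard_exchange_eq hwn₀ hzn (Set.toFinite _), hn₀]
      · rw [hv']
        rintro (⟨-, h⟩ | h)
        · exact h rfl
        · refine hwm₂ ?_
          rw [Set.mem_singleton_iff.1 h]
          exact hzm
    · have hn₀' : n₀.verts.ncard = 2 * matchingNumber H := hn₀
      have hpos : 0 < n₀.verts.ncard := (Set.ncard_pos (Set.toFinite _)).2 ⟨w, hwn₀⟩
      have hm₁max : IsMaxFM H m₁ := by
        unfold IsMaxFM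
        rw [hm₁v, ncard_union_two hwm₂ hzm₂ (Ne.symm hzw) (Set.toFinite _), hm2card]
        omega
      by_cases hzu : z = u
      · refine hv (geD_iff_fm.2 ⟨m₁, hm₁max, ?_⟩)
        rw [hm₁v]
        rintro (h | h)
        · exact hvm₂ h
        · rcases h with h | h
          · exact hwv h.symm
          · rw [Set.mem_singleton_iff] at h
            exact hne (h.trans hzu).symm
      · refine hu (geD_iff_fm.2 ⟨m₁, hm₁max, ?_⟩)
        rw [hm₁v]
        rintro (h | h)
        · exact hum₂ h
        · rcases h with h | h
          · exact hwu h.symm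
          · exact hzu (Set.mem_singleton_iff.1 h).symm
  · refine hwD (geD_iff_fm.2 ⟨m.downA hp, ?_, ?_⟩)
    · unfold IsMaxFM
      rw [FM.downA_verts, hm, hν]
    · rw [FM.downA_verts]; exact hwm

/-- Easy case: `u ∈ A(H)`, via the stability lemma. -/
lemma geD_addE_case2 (hne : u ≠ v) (ha : u ∈ geA H) :
    geD (addE H u v) ⊆ geD H := by
  intro w hw
  by_contra hwD
  have hall : Allowed H u v := Or.inr (Or.inl ha)
  have hν := matchingNumber_addE hne hall
  obtain ⟨m, hm, hwm⟩ := geD_iff_fm.1 hw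
  by_cases hp : m.f u = some v
  · have humem : u ∈ m.verts := FM.mem_verts_of_eq_some hp
    have hvmem : v ∈ m.verts := FM.partner_mem_verts hp
    have hwu : w ≠ u := by rintro rfl; exact hwm humem
    have hm2v : (m.downB hp).verts = m.verts \ {u, v} := FM.downB_verts m hp
    -- push it down to `delV H u`
    have hm3 : ∀ {x y : V}, (m.downB hp).f x = some y → (delV H u).Adj x y := by
      intro x y hxy
      have hx : x ∈ (m.downB hp).verts := FM.mem_verts_of_eq_some hxy
      have hy : y ∈ (m.downB hp).verts := FM.partner_mem_verts hxy
      rw [hm2v] at hx hy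
      refine delV_adj.2 ⟨(m.downB hp).adj hxy, ?_, ?_⟩
      · exact fun h => hx.2 (Or.inl h)
      · exact fun h => hy.2 (Or.inl h)
    have hcard : ((m.downB hp).ofAdj hm3).verts.ncard = 2 * matchingNumber (delV H u) := by
      rw [FM.ofAdj_verts, hm2v, ncard_diff_two humem hvmem hne (Set.toFinite _), hm, hν]
      have := delV_matchingNumber (H := H) ha.1
      omega
    have hwDel : w ∈ geD (delV H u) := by
      refine geD_iff_fm.2 ⟨(m.downB hp).ofAdj hm3, hcard, ?_⟩
      rw [FM.ofAdj_verts, hm2v]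
      exact fun h => hwm h.1
    rw [delV_geD_eq ha] at hwDel
    rcases hwDel with h | h
    · exact hwD h
    · exact hwu (Set.mem_singleton_iff.1 h)
  · refine hwD (geD_iff_fm.2 ⟨m.downA hp, ?_, ?_⟩)
    · unfold IsMaxFM
      rw [FM.downA_verts, hm, hν]
    · rw [FM.downA_verts]; exact hwm

end PerEdgeEasy

section PerEdgeHard

variable [Fintype V]

/-- Leaf case `A(H) = ∅` of the hard case. -/
lemma geD_addE_case4_leaf (H : SimpleGraph V) (u v : V) (hA : geA H = ∅) (hne : u ≠ v)
    (hnadj : ¬ H.Adj u v) (hu : u ∈ geD H) (hv : v ∈ geD H)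
    (hr : (H.induce (geD H)).Reachable ⟨u, hu⟩ ⟨v, hv⟩) :
    geD (addE H u v) ⊆ geD H := by
  intro w hw
  by_contra hwD
  have hall : Allowed H u v := Or.inr (Or.inr (Or.inr ⟨hu, hv, hr⟩))
  have hν := matchingNumber_addE hne hall
  obtain ⟨m, hm, hwm⟩ := geD_iff_fm.1 hw
  by_cases hp : m.f u = some v
  swap
  · refine hwD (geD_iff_fm.2 ⟨m.downA hp, ?_, ?_⟩)
    · unfold IsMaxFM
      rw [FM.downA_verts, hm, hν]
    · rw [FM.downA_verts]; exact hwm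
  -- the D-component of u
  set S : Set V := {x | ∃ hx : x ∈ geD H, (H.induce (geD H)).Reachable ⟨u, hu⟩ ⟨x, hx⟩}
    with hSdef
  have hSsub : S ⊆ geD H := fun x hx => hx.1
  have huS : u ∈ S := ⟨hu, SimpleGraph.Reachable.refl _⟩
  have hvS : v ∈ S := ⟨hv, hr⟩
  have hSclosed : ∀ {x y : V}, H.Adj x y → x ∈ S → y ∈ S := by
    intro x y hxy hxS
    obtain ⟨hxD, hxr⟩ := hxS
    have hyD : y ∈ geD H := by
      by_contra hyD
      have : y ∈ geA H := ⟨hyD, x, hxD, hxy.symm⟩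
      rw [hA] at this
      exact this
    exact ⟨hyD, hxr.trans (SimpleGraph.Adj.reachable (induce_adj_of hxD hyD hxy))⟩
  obtain ⟨nu, hnu, hunu⟩ := geD_iff_fm.1 hu
  have hcov : ∀ x ∈ S, x ≠ u → x ∈ nu.verts := by
    intro x hxS hxu
    by_contra hc
    exact noPath' hu (hSsub hxS) hxS.2 (Ne.symm hxu) hnu hunu hc
  have hwS : w ∉ S := fun h => hwD (hSsub h)
  -- combine nu on S with m off S
  obtain ⟨fst, hfstv⟩ : ∃ fst : FM H, fst.verts = (nu.verts ∩ S) ∪ (m.verts \ S) := by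
    refine ⟨⟨fun x => if x ∈ S then nu.f x else m.f x, ?_, ?_⟩, ?_⟩
    · intro x y h
      by_cases hxS : x ∈ S
      · rw [if_pos hxS] at h
        have hyS : y ∈ S := hSclosed (nu.adj h) hxS
        rw [if_pos hyS]
        exact nu.inv h
      · rw [if_neg hxS] at h
        have hyS : y ∉ S := by
          intro hyS
          rcases addE_adj.1 (m.adj h) with h' | ⟨h', -⟩
          · exact hxS (hSclosed h'.symm hyS)
          · rcases h' with ⟨rfl, rfl⟩ | ⟨rfl, rfl⟩
            · exact hxS huS
            · exact hxS hvS
        rw [if_neg hyS]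
        exact m.inv h
    · intro x y h
      by_cases hxS : x ∈ S
      · rw [if_pos hxS] at h
        exact nu.adj h
      · rw [if_neg hxS] at h
        rcases addE_adj.1 (m.adj h) with h' | ⟨h', -⟩
        · exact h'
        · exfalso
          rcases h' with ⟨rfl, rfl⟩ | ⟨rfl, rfl⟩
          · exact hxS huS
          · exact hxS hvS
    · ext x
      constructor
      · intro hx
        have hx' : (if x ∈ S then nu.f x else m.f x) ≠ none := hx
        by_cases hxS : x ∈ S
        · rw [if_pos hxS] at hx'
          exact Or.inl ⟨hx', hxS⟩
        · rw [if_neg hxS] at hx'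
          exact Or.inr ⟨hx', hxS⟩
      · intro hx
        show (if x ∈ S then nu.f x else m.f x) ≠ none
        rcases hx with ⟨h1, h2⟩ | ⟨h1, h2⟩
        · rw [if_pos h2]; exact h1
        · rw [if_neg h2]; exact h1
  have hinter : nu.verts ∩ S = S \ {u} := by
    ext x
    constructor
    · rintro ⟨hxn, hxS⟩
      exact ⟨hxS, fun h => hunu (Set.mem_singleton_iff.1 h ▸ hxn)⟩
    · rintro ⟨hxS, hxu⟩
      exact ⟨hcov x hxS (fun h => hxu (Set.mem_singleton_iff.2 h)), hxS⟩
  have hdisj : Disjoint (S \ {u}) (m.verts \ S) := by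
    rw [Set.disjoint_left]
    rintro x ⟨hxS, -⟩ ⟨-, hxS'⟩
    exact hxS' hxS
  have hfcard : fst.verts.ncard = (S \ {u}).ncard + (m.verts \ S).ncard := by
    rw [hfstv, hinter]
    exact Set.ncard_union_eq hdisj (Set.toFinite _) (Set.toFinite _)
  have hSu : (S \ {u}).ncard = S.ncard - 1 :=
    Set.ncard_diff_singleton_of_mem huS
  have hsplit : (m.verts ∩ S).ncard + (m.verts \ S).ncard = 2 * matchingNumber H := by
    rw [Set.ncard_inter_add_ncard_diff_eq_ncard m.verts S (Set.toFinite _), hm, hν]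
  have hAleS : (m.verts ∩ S).ncard ≤ S.ncard :=
    Set.ncard_le_ncard Set.inter_subset_right (Set.toFinite _)
  have hSpos : 0 < S.ncard := (Set.ncard_pos (Set.toFinite _)).2 ⟨u, huS⟩
  have hle := FM.ncard_le fst
  rcases eq_or_lt_of_le hAleS with hAeq | hAlt
  · -- m covers all of S : parity contradiction
    obtain ⟨r, hr'⟩ := FM.even_ncard_verts fst
    omega
  · -- otherwise fst is a maximum matching of H exposing w
    have hfmax : IsMaxFM H fst := by
      unfold IsMaxFM
      omega
    refine hwD (geD_iff_fm.2 ⟨fst, hfmax, ?_⟩)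
    rw [hfstv, hinter]
    rintro (⟨h, -⟩ | ⟨h, -⟩)
    · exact hwS h
    · exact hwm h

/-- The hard case, by induction on `|A(H)|`. -/
lemma geD_addE_case4_aux : ∀ (k : ℕ) (H : SimpleGraph V) (u v : V), (geA H).ncard ≤ k →
    u ≠ v → ¬ H.Adj u v → ∀ (hu : u ∈ geD H) (hv : v ∈ geD H),
    (H.induce (geD H)).Reachable ⟨u, hu⟩ ⟨v, hv⟩ → geD (addE H u v) ⊆ geD H := by
  intro k
  induction k with
  | zero =>
    intro H u v hk hne hnadj hu hv hr
    have hA : geA H = ∅ := by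
      have : (geA H).ncard = 0 := by omega
      rwa [Set.ncard_eq_zero (Set.toFinite _)] at this
    exact geD_addE_case4_leaf H u v hA hne hnadj hu hv hr
  | succ k ih =>
    intro H u v hk hne hnadj hu hv hr
    rcases Set.eq_empty_or_nonempty (geA H) with hA | ⟨a, ha⟩
    · exact geD_addE_case4_leaf H u v hA hne hnadj hu hv hr
    have hall : Allowed H u v := Or.inr (Or.inr (Or.inr ⟨hu, hv, hr⟩))
    have hν := matchingNumber_addE hne hall
    have hau : a ≠ u := by rintro rfl; exact ha.1 hu
    have hav : a ≠ v := by rintro rfl; exact ha.1 hv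
    have hD1 : geD (delV H a) = geD H ∪ {a} := delV_geD_eq ha
    have hA1 : geA (delV H a) = geA H \ {a} := delV_geA_eq ha
    have hA1card : (geA (delV H a)).ncard ≤ k := by
      rw [hA1]
      have := Set.ncard_diff_singleton_of_mem ha
      omega
    have hu1 : u ∈ geD (delV H a) := by rw [hD1]; exact Or.inl hu
    have hv1 : v ∈ geD (delV H a) := by rw [hD1]; exact Or.inl hv
    have hnadj1 : ¬ (delV H a).Adj u v := fun h => hnadj (delV_adj.1 h).1
    have hr1 : ((delV H a).induce (geD (delV H a))).Reachable ⟨u, hu1⟩ ⟨v, hv1⟩ := by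
      have := reachable_induce_mono (H := H) (H' := delV H a)
        (s := geD H) (s' := geD (delV H a))
        (by rw [hD1]; exact Set.subset_union_left)
        (by
          intro x y hx hy hxy
          refine delV_adj.2 ⟨hxy, ?_, ?_⟩
          · rintro rfl; exact ha.1 hx
          · rintro rfl; exact ha.1 hy) hr
      exact this
    have hIH := ih (delV H a) u v hA1card hne hnadj1 hu1 hv1 hr1
    have hν1 := delV_matchingNumber (H := H) ha.1
    have hνK1 : matchingNumber (addE (delV H a) u v) = matchingNumber (delV H a) :=
      matchingNumber_addE hne (Or.inr (Or.inr (Or.inr ⟨hu1, hv1, hr1⟩)))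
    -- subclaim : a is essential in addE H u v
    have hsub : a ∉ geD (addE H u v) := by
      intro haK
      obtain ⟨ma, hma, hama⟩ := geD_iff_fm.1 haK
      by_cases hpa : ma.f u = some v
      · have humem : u ∈ ma.verts := FM.mem_verts_of_eq_some hpa
        have hvmem : v ∈ ma.verts := FM.partner_mem_verts hpa
        have hm2v : (ma.downB hpa).verts = ma.verts \ {u, v} := FM.downB_verts ma hpa
        have hm3 : ∀ {x y : V}, (ma.downB hpa).f x = some y → (delV H a).Adj x y := by
          intro x y hxy
          have hx : x ∈ (ma.downB hpa).verts := FM.mem_verts_of_eq_some hxy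
          have hy : y ∈ (ma.downB hpa).verts := FM.partner_mem_verts hxy
          rw [hm2v] at hx hy
          refine delV_adj.2 ⟨(ma.downB hpa).adj hxy, ?_, ?_⟩
          · rintro rfl; exact hama hx.1
          · rintro rfl; exact hama hy.1
        set m₃ : FM (delV H a) := (ma.downB hpa).ofAdj hm3 with hm₃def
        have hum₃ : u ∉ m₃.verts := by
          rw [hm₃def, FM.ofAdj_verts, hm2v]; simp
        have hvm₃ : v ∉ m₃.verts := by
          rw [hm₃def, FM.ofAdj_verts, hm2v]; simp
        have hm₃card : m₃.verts.ncard = 2 * matchingNumber H - 2 := by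
          rw [hm₃def, FM.ofAdj_verts, hm2v, ncard_diff_two humem hvmem hne (Set.toFinite _),
            hma, hν]
        have hpos : 0 < 2 * matchingNumber H := by
          have : 0 < ma.verts.ncard := (Set.ncard_pos (Set.toFinite _)).2 ⟨u, humem⟩
          have hma' : ma.verts.ncard = 2 * matchingNumber (addE H u v) := hma
          omega
        have hm₄ := (m₃.ofLE (le_addE (delV H a) u v)).add2 (addE_adj_self hne)
          (by rw [FM.ofLE_verts]; exact hum₃) (by rw [FM.ofLE_verts]; exact hvm₃)
        have hm₄card := FM.ncard_le ((m₃.ofLE (le_addE (delV H a) u v)).add2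
          (addE_adj_self hne) (by rw [FM.ofLE_verts]; exact hum₃)
          (by rw [FM.ofLE_verts]; exact hvm₃))
        rw [FM.add2_verts, FM.ofLE_verts, ncard_union_two hum₃ hvm₃ hne (Set.toFinite _),
          hm₃card, hνK1] at hm₄card
        omega
      · refine ha.1 (geD_iff_fm.2 ⟨ma.downA hpa, ?_, ?_⟩)
        · unfold IsMaxFM
          rw [FM.downA_verts, hma, hν]
        · rw [FM.downA_verts]; exact hama
    -- delete `a` from the extended graph
    have hgraph : delV (addE H u v) a = addE (delV H a) u v := by
      ext x y
      rw [delV_adj, addE_adj, addE_adj, delV_adj]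
      constructor
      · rintro ⟨h | h, hxa, hya⟩
        · exact Or.inl ⟨h, hxa, hya⟩
        · exact Or.inr h
      · rintro (⟨h, hxa, hya⟩ | h)
        · exact ⟨Or.inl h, hxa, hya⟩
        · rcases h with ⟨h', hne'⟩
          rcases h' with ⟨rfl, rfl⟩ | ⟨rfl, rfl⟩
          · exact ⟨Or.inr ⟨Or.inl ⟨rfl, rfl⟩, hne'⟩, Ne.symm hau, Ne.symm hav⟩
          · exact ⟨Or.inr ⟨Or.inr ⟨rfl, rfl⟩, hne'⟩, Ne.symm hav, Ne.symm hau⟩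
    intro w hw
    by_contra hwD
    have hwa : w ≠ a := by rintro rfl; exact hsub hw
    have hw1 : w ∈ geD (delV (addE H u v) a) := delV_geD_subset hsub hw
    rw [hgraph] at hw1
    have hw2 : w ∈ geD (delV H a) := hIH hw1
    rw [hD1] at hw2
    rcases hw2 with h | h
    · exact hwD h
    · exact hwa (Set.mem_singleton_iff.1 h)

end PerEdgeHard

section Assembly

variable [Fintype V]

/-- Per-edge master lemma. -/
lemma geD_addE_eq {H : SimpleGraph V} {u v : V} (hne : u ≠ v) (hnadj : ¬ H.Adj u v)
    (hall : Allowed H u v) : geD (addE H u v) = geD H := by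
  refine Set.Subset.antisymm ?_ (geD_le_addE hne hall)
  rcases hall with ⟨h1, h2⟩ | h | h | ⟨hu, hv, hr⟩
  · exact geD_addE_case1 hne h1 h2
  · exact geD_addE_case2 hne h
  · rw [addE_comm]
    exact geD_addE_case2 hne.symm h
  · exact geD_addE_case4_aux (geA H).ncard H u v le_rfl hne hnadj hu hv hr

/-- Add all missing edges of `G'` one at a time. -/
lemma extend_all {G G' : SimpleGraph V}
    (hAll : ∀ H : SimpleGraph V, G ≤ H → H ≤ G' → geD H = geD G →
      ∀ u v : V, G'.Adj u v → ¬ H.Adj u v → Allowed H u v) :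
    ∀ (N : ℕ) (H : SimpleGraph V), G ≤ H → H ≤ G' →
      (G'.edgeSet \ H.edgeSet).ncard ≤ N →
      geD H = geD G → matchingNumber H = matchingNumber G →
      geD G' = geD G ∧ matchingNumber G' = matchingNumber G := by
  intro N
  induction N with
  | zero =>
    intro H h1 h2 h3 h4 h5
    have hempty : G'.edgeSet \ H.edgeSet = ∅ := by
      rw [← Set.ncard_eq_zero (Set.toFinite _)]
      omega
    have hle : G' ≤ H := by
      rw [← SimpleGraph.edgeSet_subset_edgeSet]
      intro e he
      by_contra hc
      have : e ∈ G'.edgeSet \ H.edgeSet := ⟨he, hc⟩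
      rw [hempty] at this
      exact this
    have heq : H = G' := le_antisymm h2 hle
    exact ⟨heq ▸ h4, heq ▸ h5⟩
  | succ N ihN =>
    intro H h1 h2 h3 h4 h5
    rcases Set.eq_empty_or_nonempty (G'.edgeSet \ H.edgeSet) with hempty | ⟨e, he⟩
    · have hle : G' ≤ H := by
        rw [← SimpleGraph.edgeSet_subset_edgeSet]
        intro e he
        by_contra hc
        have : e ∈ G'.edgeSet \ H.edgeSet := ⟨he, hc⟩
        rw [hempty] at this
        exact this
      have heq : H = G' := le_antisymm h2 hle
      exact ⟨heq ▸ h4, heq ▸ h5⟩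
    · obtain ⟨u, v⟩ := e
      obtain ⟨heG, heH⟩ := he
      rw [SimpleGraph.mem_edgeSet] at heG
      have heH' : ¬ H.Adj u v := by rwa [SimpleGraph.mem_edgeSet] at heH
      have hne : u ≠ v := heG.ne
      have hallowed : Allowed H u v := hAll H h1 h2 h4 u v heG heH'
      have hK1 : G ≤ addE H u v := h1.trans (le_addE H u v)
      have hK2 : addE H u v ≤ G' := by
        refine sup_le h2 ?_
        intro a b hab
        rw [SimpleGraph.fromEdgeSet_adj, Set.mem_singleton_iff, Sym2.eq_iff] at hab
        rcases hab with ⟨⟨rfl, rfl⟩ | ⟨rfl, rfl⟩, -⟩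
        · exact heG
        · exact heG.symm
      have hmeas : (G'.edgeSet \ (addE H u v).edgeSet).ncard ≤ N := by
        have hsub : G'.edgeSet \ (addE H u v).edgeSet ⊆
            (G'.edgeSet \ H.edgeSet) \ {s(u, v)} := by
          rintro e' ⟨h1', h2'⟩
          refine ⟨⟨h1', fun hc => h2' ?_⟩, fun hc => h2' ?_⟩
          · exact SimpleGraph.edgeSet_mono (le_addE H u v) hc
          · rw [Set.mem_singleton_iff.1 hc, SimpleGraph.mem_edgeSet]
            exact addE_adj_self hne
        have hmem : s(u, v) ∈ G'.edgeSet \ H.edgeSet := ⟨(SimpleGraph.mem_edgeSet _).2 heG, heH⟩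
        have h6 := Set.ncard_le_ncard hsub (Set.toFinite _)
        rw [Set.ncard_diff_singleton_of_mem hmem] at h6
        have hpos : 0 < (G'.edgeSet \ H.edgeSet).ncard :=
          (Set.ncard_pos (Set.toFinite _)).2 ⟨s(u, v), hmem⟩
        omega
      have hD : geD (addE H u v) = geD G := (geD_addE_eq hne heH' hallowed).trans h4
      have hν : matchingNumber (addE H u v) = matchingNumber G :=
        (matchingNumber_addE hne hallowed).trans h5
      exact ihN (addE H u v) hK1 hK2 hmeas hD hν

end Assembly


/-- `CAD`-completion: adding all pairs inside `C`, all pairs meeting `A`,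
and all pairs inside a common component of `G[D]` preserves the Gallai–Edmonds
decomposition and the matching number. -/
theorem GE_CAD_complete [Fintype V] (G : SimpleGraph V) :
    G ≤ (G ⊔ SimpleGraph.fromRel (fun u v =>
          (u ∈ geC G ∧ v ∈ geC G) ∨ u ∈ geA G ∨
          (∃ (hu : u ∈ geD G) (hv : v ∈ geD G),
            (G.induce (geD G)).Reachable ⟨u, hu⟩ ⟨v, hv⟩))) ∧
    geC (G ⊔ SimpleGraph.fromRel (fun u v =>
          (u ∈ geC G ∧ v ∈ geC G) ∨ u ∈ geA G ∨
          (∃ (hu : u ∈ geD G) (hv : v ∈ geD G),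
            (G.induce (geD G)).Reachable ⟨u, hu⟩ ⟨v, hv⟩))) = geC G ∧
    geA (G ⊔ SimpleGraph.fromRel (fun u v =>
          (u ∈ geC G ∧ v ∈ geC G) ∨ u ∈ geA G ∨
          (∃ (hu : u ∈ geD G) (hv : v ∈ geD G),
            (G.induce (geD G)).Reachable ⟨u, hu⟩ ⟨v, hv⟩))) = geA G ∧
    geD (G ⊔ SimpleGraph.fromRel (fun u v =>
          (u ∈ geC G ∧ v ∈ geC G) ∨ u ∈ geA G ∨
          (∃ (hu : u ∈ geD G) (hv : v ∈ geD G),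
            (G.induce (geD G)).Reachable ⟨u, hu⟩ ⟨v, hv⟩))) = geD G ∧
    matchingNumber (G ⊔ SimpleGraph.fromRel (fun u v =>
          (u ∈ geC G ∧ v ∈ geC G) ∨ u ∈ geA G ∨
          (∃ (hu : u ∈ geD G) (hv : v ∈ geD G),
            (G.induce (geD G)).Reachable ⟨u, hu⟩ ⟨v, hv⟩))) = matchingNumber G := by
  set G' := G ⊔ SimpleGraph.fromRel (fun u v =>
          (u ∈ geC G ∧ v ∈ geC G) ∨ u ∈ geA G ∨
          (∃ (hu : u ∈ geD G) (hv : v ∈ geD G),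
            (G.induce (geD G)).Reachable ⟨u, hu⟩ ⟨v, hv⟩)) with hG'
  have hAll : ∀ H : SimpleGraph V, G ≤ H → H ≤ G' → geD H = geD G →
      ∀ u v : V, G'.Adj u v → ¬ H.Adj u v → Allowed H u v := by
    intro H h1 h2 h4 u v hadj hnadj
    rw [hG', SimpleGraph.sup_adj] at hadj
    rcases hadj with h | h
    · exact absurd (h1 h) hnadj
    · rw [SimpleGraph.fromRel_adj] at h
      obtain ⟨hne, h⟩ := h
      have geAGH : ∀ x : V, x ∈ geA G → x ∈ geA H := by
        rintro x ⟨hx1, d, hd, hxd⟩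
        exact ⟨by rw [h4]; exact hx1, d, by rw [h4]; exact hd, h1 hxd⟩
      have hDcase : ∀ a b : V, (∃ (ha : a ∈ geD G) (hb : b ∈ geD G),
          (G.induce (geD G)).Reachable ⟨a, ha⟩ ⟨b, hb⟩) → Allowed H a b := by
        rintro a b ⟨ha, hb, hrab⟩
        have ha' : a ∈ geD H := by rw [h4]; exact ha
        have hb' : b ∈ geD H := by rw [h4]; exact hb
        refine Or.inr (Or.inr (Or.inr ⟨ha', hb', ?_⟩))
        exact reachable_induce_mono (by rw [h4]) (fun _ _ hxy => h1 hxy) hrab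
      rcases h with h | h
      · rcases h with ⟨h5, h6⟩ | h5 | h5
        · exact Or.inl ⟨by rw [h4]; exact h5.1, by rw [h4]; exact h6.1⟩
        · exact Or.inr (Or.inl (geAGH u h5))
        · exact hDcase u v h5
      · rcases h with ⟨h5, h6⟩ | h5 | h5
        · exact Or.inl ⟨by rw [h4]; exact h6.1, by rw [h4]; exact h5.1⟩
        · exact Or.inr (Or.inr (Or.inl (geAGH v h5)))
        · exact (hDcase v u h5).symm
  obtain ⟨hD, hν⟩ := extend_all hAll (G'.edgeSet \ G.edgeSet).ncard G
    le_rfl le_sup_left le_rfl rfl rfl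
  have hA : geA G' = geA G := by
    ext x
    constructor
    · rintro ⟨hx1, d, hd1, hadj⟩
      rw [hD] at hx1 hd1
      refine ⟨hx1, ?_⟩
      rw [hG', SimpleGraph.sup_adj] at hadj
      rcases hadj with h | h
      · exact ⟨d, hd1, h⟩
      · rw [SimpleGraph.fromRel_adj] at h
        obtain ⟨hne, h⟩ := h
        rcases h with (⟨hxC, hdC⟩ | h5 | ⟨hx', hd', -⟩) | (⟨hdC, hxC⟩ | h5 | ⟨hd', hx', -⟩)
        · exact absurd hd1 hdC.1
        · exact h5.2
        · exact absurd hx' hx1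
        · exact absurd hd1 hdC.1
        · exact absurd hd1 h5.1
        · exact absurd hx' hx1
    · rintro ⟨hx1, d, hd1, hadj⟩
      refine ⟨by rw [hD]; exact hx1, d, by rw [hD]; exact hd1, ?_⟩
      rw [hG', SimpleGraph.sup_adj]
      exact Or.inl hadj
  refine ⟨le_sup_left, ?_, hA, hD, hν⟩
  simp only [geC, hD, hA]


end GRT
end
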